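/- arXiv:0907.3103 — 12 statements merged into one kernel-verified Lean document; each statement's English description precedes it below -/
import Mathlib

section
/- Let H be a complex Hilbert space, let A be a norm-closed subalgebra of B(H), and let D be a norm-closed subalgebra of A such that d a d' ∈ D for all d, d' ∈ D and a ∈ A, and such that D has a contractive approximate identity. If A is semiprime, then D is semiprime; that is, if every norm-closed two-sided ideal J of A satisfying j j' = 0 for all j, j' ∈ J equals {0}, then every norm-closed two-sided ideal K of D satisfying k k' = 0 for all k, k' ∈ K equals {0}. -/
open Filter

variable {H : Type*} [NormedAddCommGroup H] [InnerProductSpace ℂ H] [CompleteSpace H]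

/-- `A` is a norm-closed (not necessarily unital) subalgebra of `B(H)`, viewed as a set. -/
def IsClosedSubalgebraSet (A : Set (H →L[ℂ] H)) : Prop :=
  IsClosed A ∧ (0 : H →L[ℂ] H) ∈ A ∧
    (∀ x ∈ A, ∀ y ∈ A, x + y ∈ A) ∧
    (∀ (c : ℂ), ∀ x ∈ A, c • x ∈ A) ∧
    (∀ x ∈ A, ∀ y ∈ A, x * y ∈ A)

/-- `J` is a norm-closed two-sided ideal of the algebra (set) `A`. -/
def IsClosedIdealOf (A J : Set (H →L[ℂ] H)) : Prop :=
  J ⊆ A ∧ IsClosed J ∧ (0 : H →L[ℂ] H) ∈ J ∧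
    (∀ x ∈ J, ∀ y ∈ J, x + y ∈ J) ∧
    (∀ (c : ℂ), ∀ x ∈ J, c • x ∈ J) ∧
    (∀ j ∈ J, ∀ a ∈ A, j * a ∈ J ∧ a * j ∈ J)

/-- `D` has a (two-sided) contractive approximate identity, formalized via a filter. -/
def HasCai (D : Set (H →L[ℂ] H)) : Prop :=
  ∃ (ι : Type) (l : Filter ι) (e : ι → H →L[ℂ] H), l.NeBot ∧
    (∀ i, e i ∈ D) ∧ (∀ i, ‖e i‖ ≤ 1) ∧
    ∀ d ∈ D, Tendsto (fun i => e i * d) l (nhds d) ∧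
      Tendsto (fun i => d * e i) l (nhds d)

/-!
Let `K` be a closed ideal of `D` with `K² = 0` and `k ∈ K`. For `a ∈ A`, `k a k` is the limit of
`k (eᵢ a eⱼ) k` along the approximate identity `(eᵢ)` of `D`, and these vanish because heredity
gives `eᵢ a eⱼ ∈ D`, hence `k (eᵢ a eⱼ) ∈ K`. So `k A k = 0`, and the closed ideal of `A` generated
by `k`, the closed span of the products `u k v` with `u, v ∈ A ∪ {1}`, squares to zero:
`(u k v)(u' k v') = u (k (v u') k) v' = 0`. By semiprimeness of `A` it is `{0}`, so `k = 0`.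
-/

open Topology

theorem mul_mul_eq_zero_of_tendsto {R ι : Type*} [NonUnitalSemiring R] [TopologicalSpace R]
    [ContinuousMul R] [T2Space R] {l : Filter ι} [l.NeBot] {e : ι → R} {k a k' : R}
    (hk : Tendsto (fun i => k * e i) l (𝓝 k)) (hk' : Tendsto (fun i => e i * k') l (𝓝 k'))
    (h : ∀ i j, k * (e i * a * e j) * k' = 0) : k * a * k' = 0 := by
  have hlim : Tendsto (fun p : ι × ι => k * e p.1 * a * (e p.2 * k')) (l ×ˢ l)
      (𝓝 (k * a * k')) :=
    ((hk.comp tendsto_fst).mul_const a).mul (hk'.comp tendsto_snd)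
  refine tendsto_nhds_unique hlim (tendsto_const_nhds.congr fun p => ?_)
  rw [← h p.1 p.2]
  simp only [mul_assoc]

theorem Submodule.mapsTo_topologicalClosure_span {𝕜 E F : Type*} [Semiring 𝕜]
    [AddCommMonoid E] [Module 𝕜 E] [TopologicalSpace E] [ContinuousAdd E] [ContinuousConstSMul 𝕜 E]
    [AddCommMonoid F] [Module 𝕜 F] [TopologicalSpace F] {S : Set E} {N : Submodule 𝕜 F}
    (f : E →ₗ[𝕜] F) (hf : Continuous f) (hN : IsClosed (N : Set F)) (h : ∀ s ∈ S, f s ∈ N) :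
    Set.MapsTo f ((span 𝕜 S).topologicalClosure : Set E) N := fun _ hx =>
  (span 𝕜 S).topologicalClosure_minimal (t := N.comap f) (span_le.mpr h) (hN.preimage hf) hx

section InsertOne

variable {M : Type*} [MulOneClass M] {A : Set M} {u x : M}

theorem mul_mem_of_mem_insert_one_left (hA : ∀ x ∈ A, ∀ y ∈ A, x * y ∈ A)
    (hu : u ∈ insert 1 A) (hx : x ∈ A) : u * x ∈ A := by
  rcases hu with rfl | hu
  · rwa [one_mul]
  · exact hA u hu x hx

theorem mul_mem_of_mem_insert_one_right (hA : ∀ x ∈ A, ∀ y ∈ A, x * y ∈ A)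
    (hu : u ∈ insert 1 A) (hx : x ∈ A) : x * u ∈ A := by
  rcases hu with rfl | hu
  · rwa [mul_one]
  · exact hA x hx u hu

theorem mul_mem_insert_one (hA : ∀ x ∈ A, ∀ y ∈ A, x * y ∈ A)
    (hu : u ∈ insert 1 A) (hx : x ∈ insert 1 A) : u * x ∈ insert 1 A := by
  rcases hx with rfl | hx
  · rwa [mul_one]
  · exact Or.inr (mul_mem_of_mem_insert_one_left hA hu hx)

end InsertOne

section ClosedIdealSpan

variable {𝕜 R : Type*} [CommSemiring 𝕜] [Semiring R] [Module 𝕜 R] [TopologicalSpace R]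
  [ContinuousAdd R] [ContinuousConstSMul 𝕜 R] {A : Set R} {x : R}

variable (𝕜) in
/-- The closed ideal of `A` generated by `x`; `insert 1 A` stands in for the unitization of `A`. -/
def closedIdealSpan (A : Set R) (x : R) : Submodule 𝕜 R :=
  (Submodule.span 𝕜 {y | ∃ u ∈ insert 1 A, ∃ v ∈ insert 1 A, y = u * x * v}).topologicalClosure

namespace closedIdealSpan

theorem self_mem : x ∈ closedIdealSpan 𝕜 A x :=
  Submodule.le_topologicalClosure _ <|
    Submodule.subset_span ⟨1, Set.mem_insert _ _, 1, Set.mem_insert _ _, by simp⟩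

theorem subset {N : Submodule 𝕜 R} (hN : IsClosed (N : Set R)) (hAN : A ⊆ N)
    (hAmul : ∀ x ∈ A, ∀ y ∈ A, x * y ∈ A) (hx : x ∈ A) :
    (closedIdealSpan 𝕜 A x : Set R) ⊆ N := by
  refine fun y hy => Submodule.mapsTo_topologicalClosure_span LinearMap.id continuous_id hN ?_ hy
  rintro _ ⟨u, hu, v, hv, rfl⟩
  exact hAN (mul_mem_of_mem_insert_one_right hAmul hv (mul_mem_of_mem_insert_one_left hAmul hu hx))

variable [ContinuousMul R]

theorem mul_mem [IsScalarTower 𝕜 R R] (hAmul : ∀ x ∈ A, ∀ y ∈ A, x * y ∈ A) {j a : R}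
    (hj : j ∈ closedIdealSpan 𝕜 A x) (ha : a ∈ A) : j * a ∈ closedIdealSpan 𝕜 A x := by
  refine Submodule.mapsTo_topologicalClosure_span (LinearMap.mulRight 𝕜 a)
    (continuous_mul_const a) (Submodule.isClosed_topologicalClosure _) ?_ hj
  rintro _ ⟨u, hu, v, hv, rfl⟩
  refine Submodule.le_topologicalClosure _ (Submodule.subset_span ⟨u, hu, v * a, ?_, ?_⟩)
  · exact Or.inr (mul_mem_of_mem_insert_one_left hAmul hv ha)
  · simp only [LinearMap.mulRight_apply, mul_assoc]

theorem mem_mul [SMulCommClass 𝕜 R R] (hAmul : ∀ x ∈ A, ∀ y ∈ A, x * y ∈ A) {j a : R}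
    (hj : j ∈ closedIdealSpan 𝕜 A x) (ha : a ∈ A) : a * j ∈ closedIdealSpan 𝕜 A x := by
  refine Submodule.mapsTo_topologicalClosure_span (LinearMap.mulLeft 𝕜 a)
    (continuous_const_mul a) (Submodule.isClosed_topologicalClosure _) ?_ hj
  rintro _ ⟨u, hu, v, hv, rfl⟩
  refine Submodule.le_topologicalClosure _ (Submodule.subset_span ⟨a * u, ?_, v, hv, ?_⟩)
  · exact Or.inr (mul_mem_of_mem_insert_one_right hAmul hu ha)
  · simp only [LinearMap.mulLeft_apply, mul_assoc]

theorem mul_eq_zero [IsScalarTower 𝕜 R R] [SMulCommClass 𝕜 R R] [T2Space R]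
    (hAmul : ∀ x ∈ A, ∀ y ∈ A, x * y ∈ A)
    (h : ∀ w ∈ insert 1 A, x * w * x = 0) :
    ∀ j ∈ closedIdealSpan 𝕜 A x, ∀ j' ∈ closedIdealSpan 𝕜 A x, j * j' = 0 := by
  set S := {y | ∃ u ∈ insert 1 A, ∃ v ∈ insert 1 A, y = u * x * v}
  have hS : ∀ s ∈ S, ∀ t ∈ S, s * t = 0 := by
    rintro _ ⟨u, -, v, hv, rfl⟩ _ ⟨u', hu', v', -, rfl⟩
    calc u * x * v * (u' * x * v') = u * (x * (v * u') * x) * v' := by simp only [mul_assoc]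
      _ = 0 := by rw [h _ (mul_mem_insert_one hAmul hv hu')]; simp
  have hright : ∀ t ∈ S, ∀ j ∈ closedIdealSpan 𝕜 A x, j * t = 0 := fun t ht _ hj =>
    Submodule.mapsTo_topologicalClosure_span (N := ⊥) (LinearMap.mulRight 𝕜 t)
      (continuous_mul_const t) isClosed_singleton (fun s hs => hS s hs t ht) hj
  exact fun j hj _ hj' =>
    Submodule.mapsTo_topologicalClosure_span (N := ⊥) (LinearMap.mulLeft 𝕜 j)
      (continuous_const_mul j) isClosed_singleton (fun t ht => hright t ht j hj) hj'

end closedIdealSpan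

end ClosedIdealSpan

def IsSemiprime (A : Set (H →L[ℂ] H)) : Prop :=
  ∀ J : Set (H →L[ℂ] H), IsClosedIdealOf A J → (∀ j ∈ J, ∀ j' ∈ J, j * j' = 0) → J = {0}

def IsClosedSubalgebraSet.toSubmodule {A : Set (H →L[ℂ] H)} (hA : IsClosedSubalgebraSet A) :
    Submodule ℂ (H →L[ℂ] H) where
  carrier := A
  zero_mem' := hA.2.1
  add_mem' ha hb := hA.2.2.1 _ ha _ hb
  smul_mem' := hA.2.2.2.1

theorem IsClosedSubalgebraSet.isClosedIdealOf_closedIdealSpan {A : Set (H →L[ℂ] H)}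
    {x : H →L[ℂ] H} (hA : IsClosedSubalgebraSet A) (hx : x ∈ A) :
    IsClosedIdealOf A (closedIdealSpan ℂ A x) :=
  ⟨closedIdealSpan.subset (N := hA.toSubmodule) hA.1 subset_rfl hA.2.2.2.2 hx,
    Submodule.isClosed_topologicalClosure _, Submodule.zero_mem _,
    fun _ h _ h' => Submodule.add_mem _ h h', fun c _ h => Submodule.smul_mem _ c h,
    fun _ hj _ ha => ⟨closedIdealSpan.mul_mem hA.2.2.2.2 hj ha,
      closedIdealSpan.mem_mul hA.2.2.2.2 hj ha⟩⟩

theorem IsSemiprime.eq_zero_of_mul_mul_eq_zero {A : Set (H →L[ℂ] H)} {x : H →L[ℂ] H}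
    (hsemiprime : IsSemiprime A) (hA : IsClosedSubalgebraSet A) (hx : x ∈ A)
    (hxx : x * x = 0) (hxAx : ∀ a ∈ A, x * a * x = 0) : x = 0 := by
  have h : ∀ w ∈ insert 1 A, x * w * x = 0 := by
    rintro w (rfl | hw)
    · rwa [mul_one]
    · exact hxAx w hw
  have hJ := hsemiprime _ (hA.isClosedIdealOf_closedIdealSpan hx)
    (closedIdealSpan.mul_eq_zero hA.2.2.2.2 h)
  have hxJ : x ∈ (closedIdealSpan ℂ A x : Set (H →L[ℂ] H)) := closedIdealSpan.self_mem
  rwa [hJ] at hxJ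

theorem semiprime_passes_to_HSA_general
    (A D : Set (H →L[ℂ] H))
    (hA : IsClosedSubalgebraSet A)
    (hDA : D ⊆ A)
    (hHer : ∀ d ∈ D, ∀ a ∈ A, ∀ d' ∈ D, d * a * d' ∈ D)
    (hcai : HasCai D)
    (hsemiprime : ∀ J : Set (H →L[ℂ] H), IsClosedIdealOf A J →
      (∀ j ∈ J, ∀ j' ∈ J, j * j' = 0) → J = {0}) :
    ∀ K : Set (H →L[ℂ] H), IsClosedIdealOf D K →
      (∀ k ∈ K, ∀ k' ∈ K, k * k' = 0) → K = {0} := by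
  rintro K ⟨hKD, -, hK0, -, -, hKideal⟩ hKK
  obtain ⟨ι, l, e, _, heD, -, he⟩ := hcai
  have hkAk : ∀ k ∈ K, ∀ a ∈ A, k * a * k = 0 := fun k hk a ha =>
    mul_mul_eq_zero_of_tendsto (he k (hKD hk)).2 (he k (hKD hk)).1 fun i j =>
      hKK _ (hKideal k hk _ (hHer _ (heD i) a ha _ (heD j))).1 k hk
  refine Set.eq_singleton_iff_unique_mem.2 ⟨hK0, fun k hk => ?_⟩
  exact IsSemiprime.eq_zero_of_mul_mul_eq_zero hsemiprime hA (hDA (hKD hk)) (hKK k hk k hk)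
    (hkAk k hk)

/-- Semiprimeness passes to hereditary subalgebras of operator algebras. -/
theorem semiprime_passes_to_HSA
    (A D : Set (H →L[ℂ] H))
    (hA : IsClosedSubalgebraSet A) (hD : IsClosedSubalgebraSet D)
    (hDA : D ⊆ A)
    (hHer : ∀ d ∈ D, ∀ a ∈ A, ∀ d' ∈ D, d * a * d' ∈ D)
    (hcai : HasCai D)
    (hsemiprime : ∀ J : Set (H →L[ℂ] H), IsClosedIdealOf A J →
      (∀ j ∈ J, ∀ j' ∈ J, j * j' = 0) → J = {0}) :
    ∀ K : Set (H →L[ℂ] H), IsClosedIdealOf D K →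
      (∀ k ∈ K, ∀ k' ∈ K, k * k' = 0) → K = {0} :=
  semiprime_passes_to_HSA_general A D hA hDA hHer hcai hsemiprime
end

section
/- Let H be a complex Hilbert space, let A be a norm-closed subalgebra of B(H), and let D be a nonzero norm-closed subalgebra of A such that d a d' ∈ D for all d, d' ∈ D and a ∈ A, and such that D has a contractive approximate identity. If A is topologically simple (its only norm-closed two-sided ideals are {0} and A), then D is topologically simple (its only norm-closed two-sided ideals are {0} and D). -/
open Filter

variable {H : Type*} [NormedAddCommGroup H] [InnerProductSpace ℂ H] [CompleteSpace H]

/-! If `K` is a nonzero closed ideal of `D`, the elements `x ∈ A` with `D Ã x Ã D ⊆ K` (`Ã` the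
unitization of `A`) form a closed ideal of `A`. It contains `K`: approximating `k ∈ K` by `k eᵢ`
and `eᵢ k` along the cai shows `K A D ⊆ K` and `D A K ⊆ K`, since `eᵢ A D` and `D A eᵢ` lie in `D`.
By simplicity this ideal is `A ⊇ D`, so `D d D ⊆ K` for every `d ∈ D`, and the cai on both sides
gives `d ∈ K`. -/

namespace HereditarySubalgebra

omit [CompleteSpace H]

variable {A D K S : Set (H →L[ℂ] H)} {x : H →L[ℂ] H}

theorem mem_of_forall_mul_mem_left (hcai : HasCai D) (hS : IsClosed S) (hx : x ∈ D)
    (h : ∀ d ∈ D, d * x ∈ S) : x ∈ S := by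
  obtain ⟨ι, l, e, hl, heD, -, he⟩ := hcai
  exact hS.mem_of_tendsto (he x hx).1 (Eventually.of_forall fun i => h _ (heD i))

theorem mem_of_forall_mul_mem_right (hcai : HasCai D) (hS : IsClosed S) (hx : x ∈ D)
    (h : ∀ d ∈ D, x * d ∈ S) : x ∈ S := by
  obtain ⟨ι, l, e, hl, heD, -, he⟩ := hcai
  exact hS.mem_of_tendsto (he x hx).2 (Eventually.of_forall fun i => h _ (heD i))

theorem mem_of_forall_mul_mul_mem (hcai : HasCai D) (hS : IsClosed S) (hx : x ∈ D)
    (h : ∀ d ∈ D, ∀ d' ∈ D, d * x * d' ∈ S) : x ∈ S :=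
  mem_of_forall_mul_mem_left hcai hS hx fun d hd =>
    mem_of_forall_mul_mem_right (S := (d * ·) ⁻¹' S) hcai (hS.preimage (continuous_const_mul d))
      hx fun d' hd' => by simpa only [Set.mem_preimage, mul_assoc] using h d hd d' hd'

theorem mul_mul_mem_of_left_mem (hcai : HasCai D)
    (hHer : ∀ d ∈ D, ∀ a ∈ A, ∀ d' ∈ D, d * a * d' ∈ D) (hK : IsClosedIdealOf D K)
    {k a d : H →L[ℂ] H} (hk : k ∈ K) (ha : a ∈ A) (hd : d ∈ D) : k * a * d ∈ K :=
  mem_of_forall_mul_mem_right (S := (· * a * d) ⁻¹' K) hcai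
    (hK.2.1.preimage ((continuous_mul_const a).mul_const d)) (hK.1 hk) fun e he => by
      simpa only [Set.mem_preimage, mul_assoc] using (hK.2.2.2.2.2 k hk _ (hHer e he a ha d hd)).1

theorem mul_mul_mem_of_right_mem (hcai : HasCai D)
    (hHer : ∀ d ∈ D, ∀ a ∈ A, ∀ d' ∈ D, d * a * d' ∈ D) (hK : IsClosedIdealOf D K)
    {d a k : H →L[ℂ] H} (hd : d ∈ D) (ha : a ∈ A) (hk : k ∈ K) : d * a * k ∈ K :=
  mem_of_forall_mul_mem_left (S := (d * a * ·) ⁻¹' K) hcai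
    (hK.2.1.preimage (continuous_const_mul _)) (hK.1 hk) fun e he => by
      simpa only [Set.mem_preimage, ← mul_assoc] using (hK.2.2.2.2.2 k hk _ (hHer d hd a ha e he)).2

/-- `insert 1 A` stands in for the unitization of `A`. -/
def compressionIdeal (A D K : Set (H →L[ℂ] H)) : Set (H →L[ℂ] H) :=
  {x ∈ A | ∀ d ∈ D, ∀ a ∈ insert 1 A, ∀ b ∈ insert 1 A, ∀ d' ∈ D, d * a * x * b * d' ∈ K}

theorem isClosed_compressionIdeal (hA : IsClosed A) (hK : IsClosed K) :
    IsClosed (compressionIdeal A D K) := by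
  have : compressionIdeal A D K = A ∩ ⋂ d ∈ D, ⋂ a ∈ insert 1 A, ⋂ b ∈ insert 1 A, ⋂ d' ∈ D,
      (fun x => d * a * x * b * d') ⁻¹' K := by
    ext; simp [compressionIdeal]
  rw [this]
  refine hA.inter (isClosed_biInter fun d _ => isClosed_biInter fun a _ =>
    isClosed_biInter fun b _ => isClosed_biInter fun d' _ => hK.preimage ?_)
  fun_prop

theorem mul_mem_of_mem_of_mem_insert_one (hA : ∀ x ∈ A, ∀ y ∈ A, x * y ∈ A)
    {a b : H →L[ℂ] H} (ha : a ∈ A) (hb : b ∈ insert 1 A) : a * b ∈ A := by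
  rcases hb with rfl | hb
  · rwa [mul_one]
  · exact hA a ha b hb

theorem mul_mem_of_mem_insert_one_of_mem (hA : ∀ x ∈ A, ∀ y ∈ A, x * y ∈ A)
    {a b : H →L[ℂ] H} (ha : a ∈ insert 1 A) (hb : b ∈ A) : a * b ∈ A := by
  rcases ha with rfl | ha
  · rwa [one_mul]
  · exact hA a ha b hb

theorem isClosedIdealOf_compressionIdeal (hA : IsClosedSubalgebraSet A)
    (hK : IsClosedIdealOf D K) : IsClosedIdealOf A (compressionIdeal A D K) := by
  obtain ⟨hAcl, hA0, hAadd, hAsmul, hAmul⟩ := hA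
  obtain ⟨-, hKcl, hK0, hKadd, hKsmul, -⟩ := hK
  refine ⟨fun x hx => hx.1, isClosed_compressionIdeal hAcl hKcl, ⟨hA0, by simp [hK0]⟩,
    fun x hx y hy => ⟨hAadd x hx.1 y hy.1, fun d hd a ha b hb d' hd' => ?_⟩,
    fun c x hx => ⟨hAsmul c x hx.1, fun d hd a ha b hb d' hd' => ?_⟩,
    fun x hx c hc => ⟨⟨hAmul x hx.1 c hc, fun d hd a ha b hb d' hd' => ?_⟩,
      ⟨hAmul c hc x hx.1, fun d hd a ha b hb d' hd' => ?_⟩⟩⟩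
  · simpa only [mul_add, add_mul] using
      hKadd _ (hx.2 d hd a ha b hb d' hd') _ (hy.2 d hd a ha b hb d' hd')
  · simpa only [mul_smul_comm, smul_mul_assoc] using hKsmul c _ (hx.2 d hd a ha b hb d' hd')
  · simpa only [mul_assoc] using
      hx.2 d hd a ha (c * b) (Or.inr (mul_mem_of_mem_of_mem_insert_one hAmul hc hb)) d' hd'
  · simpa only [mul_assoc] using
      hx.2 d hd (a * c) (Or.inr (mul_mem_of_mem_insert_one_of_mem hAmul ha hc)) b hb d' hd'

theorem subset_compressionIdeal (hDA : D ⊆ A) (hcai : HasCai D)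
    (hHer : ∀ d ∈ D, ∀ a ∈ A, ∀ d' ∈ D, d * a * d' ∈ D) (hK : IsClosedIdealOf D K) :
    K ⊆ compressionIdeal A D K := by
  intro k hk
  refine ⟨hDA (hK.1 hk), fun d hd a ha b hb d' hd' => ?_⟩
  have hdak : d * a * k ∈ K := by
    rcases ha with rfl | ha
    · simpa only [mul_one] using (hK.2.2.2.2.2 k hk d hd).2
    · exact mul_mul_mem_of_right_mem hcai hHer hK hd ha hk
  rcases hb with rfl | hb
  · simpa only [mul_one] using (hK.2.2.2.2.2 _ hdak d' hd').1
  · exact mul_mul_mem_of_left_mem hcai hHer hK hdak hb hd'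

end HereditarySubalgebra

open HereditarySubalgebra in
theorem topologically_simple_passes_to_HSA_general
    (A D : Set (H →L[ℂ] H))
    (hA : IsClosedSubalgebraSet A)
    (hDA : D ⊆ A)
    (hHer : ∀ d ∈ D, ∀ a ∈ A, ∀ d' ∈ D, d * a * d' ∈ D)
    (hcai : HasCai D)
    (hsimple : ∀ J : Set (H →L[ℂ] H), IsClosedIdealOf A J → J = {0} ∨ J = A) :
    ∀ K : Set (H →L[ℂ] H), IsClosedIdealOf D K → K = {0} ∨ K = D := by
  intro K hK
  refine or_iff_not_imp_left.2 fun hK0 => ?_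
  have hKI : K ⊆ compressionIdeal A D K := subset_compressionIdeal hDA hcai hHer hK
  have hIA : compressionIdeal A D K = A := by
    refine (hsimple _ (isClosedIdealOf_compressionIdeal hA hK)).resolve_left fun hI0 => hK0 ?_
    exact Set.Subset.antisymm (hI0 ▸ hKI) (Set.singleton_subset_iff.2 hK.2.2.1)
  refine Set.Subset.antisymm hK.1 fun d hd => mem_of_forall_mul_mul_mem hcai hK.2.1 hd ?_
  intro d₁ hd₁ d₂ hd₂
  have hdI : d ∈ compressionIdeal A D K := hIA.symm ▸ hDA hd
  simpa only [mul_one] using hdI.2 d₁ hd₁ 1 (Set.mem_insert _ _) 1 (Set.mem_insert _ _) d₂ hd₂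

/-- Topological simplicity passes to nonzero hereditary subalgebras of operator algebras. -/
theorem topologically_simple_passes_to_HSA
    (A D : Set (H →L[ℂ] H))
    (hA : IsClosedSubalgebraSet A) (hD : IsClosedSubalgebraSet D)
    (hDA : D ⊆ A)
    (hDne : ∃ d ∈ D, d ≠ 0)
    (hHer : ∀ d ∈ D, ∀ a ∈ A, ∀ d' ∈ D, d * a * d' ∈ D)
    (hcai : HasCai D)
    (hsimple : ∀ J : Set (H →L[ℂ] H), IsClosedIdealOf A J → J = {0} ∨ J = A) :
    ∀ K : Set (H →L[ℂ] H), IsClosedIdealOf D K → K = {0} ∨ K = D :=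
  topologically_simple_passes_to_HSA_general A D hA hDA hHer hcai hsimple
end

section
/- Let A be a unital complex Banach algebra and let x ∈ A with ‖x‖ ≤ 1. The following are equivalent: (i) 1 − x has a left inverse in A; (ii) 1 − x has a right inverse in A; (iii) {(1−x)a : a ∈ A} = A; (iv) the norm closure of {(1−x)a : a ∈ A} equals A; (v) {a(1−x) : a ∈ A} = A; (vi) the norm closure of {a(1−x) : a ∈ A} equals A; (vii) 1 − x is invertible in A. -/
/-!
Since `‖x‖ ≤ 1`, the element `1 - x` is the limit of the units `1 - t • x`, `0 < t < 1`. If an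
element `a` of the closure of the units has a left inverse `y`, choose a unit `u` with
`‖y‖ * ‖a - u‖ < 1`: then `y * u = 1 - y * (a - u)` is a unit, hence so are `y` and `a`
(symmetrically for right inverses). A right ideal `(1 - x)A` with dense closure meets the open
group of units, so `1 - x` has a right inverse (symmetrically for left ideals).
-/

open Filter Topology

theorem exists_mem_mul_norm_sub_lt_one_of_mem_closure {E : Type*} [SeminormedAddCommGroup E]
    {s : Set E} {a : E} (ha : a ∈ closure s) (c : ℝ) : ∃ u ∈ s, c * ‖a - u‖ < 1 := by
  have hnear : ∀ᶠ b in 𝓝 a, c * ‖a - b‖ < 1 :=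
    (by fun_prop : Continuous fun b ↦ c * ‖a - b‖).continuousAt.eventually_lt continuousAt_const
      (by simp)
  obtain ⟨u, hau, hu⟩ := mem_closure_iff_nhds.mp ha _ hnear
  exact ⟨u, hu, hau⟩

section
variable {A : Type*} [NormedRing A] [HasSummableGeomSeries A]

theorem IsUnit.of_mul_eq_one_right_of_mem_closure {a : A} (y : A) (hya : y * a = 1)
    (ha : a ∈ closure {u : A | IsUnit u}) : IsUnit a := by
  obtain ⟨u, hu, hau⟩ := exists_mem_mul_norm_sub_lt_one_of_mem_closure ha ‖y‖
  have hyu : IsUnit (y * u) := by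
    rw [show y * u = 1 - y * (a - u) by rw [mul_sub, hya, sub_sub_cancel]]
    exact isUnit_one_sub_of_norm_lt_one ((norm_mul_le _ _).trans_lt hau)
  obtain ⟨v, rfl⟩ := (hu.unit.isUnit_mul_units y).mp (by rwa [hu.unit_spec])
  exact Units.mul_eq_one_iff_inv_eq.mp hya ▸ (v⁻¹).isUnit

theorem IsUnit.of_mul_eq_one_of_mem_closure {a : A} (y : A) (hay : a * y = 1)
    (ha : a ∈ closure {u : A | IsUnit u}) : IsUnit a := by
  obtain ⟨u, hu, hau⟩ := exists_mem_mul_norm_sub_lt_one_of_mem_closure ha ‖y‖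
  have huy : IsUnit (u * y) := by
    rw [show u * y = 1 - (a - u) * y by rw [sub_mul, hay, sub_sub_cancel]]
    exact isUnit_one_sub_of_norm_lt_one ((norm_mul_le _ _).trans_lt (by rwa [mul_comm]))
  obtain ⟨v, rfl⟩ := (hu.unit.isUnit_units_mul y).mp (by rwa [hu.unit_spec])
  exact Units.mul_eq_one_iff_eq_inv.mp hay ▸ (v⁻¹).isUnit

theorem exists_right_inv_of_one_mem_closure {a : A}
    (h : (1 : A) ∈ closure {y : A | ∃ c : A, y = a * c}) : ∃ y : A, a * y = 1 := by
  obtain ⟨_, ⟨v, hv⟩, c, rfl⟩ := mem_closure_iff.mp h _ Units.isOpen isUnit_one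
  exact ⟨c * ↑(v⁻¹ : Aˣ), by rw [← mul_assoc, ← hv, Units.mul_inv]⟩

theorem exists_left_inv_of_one_mem_closure {a : A}
    (h : (1 : A) ∈ closure {y : A | ∃ c : A, y = c * a}) : ∃ y : A, y * a = 1 := by
  obtain ⟨_, ⟨v, hv⟩, c, rfl⟩ := mem_closure_iff.mp h _ Units.isOpen isUnit_one
  exact ⟨↑(v⁻¹ : Aˣ) * c, by rw [mul_assoc, ← hv, Units.inv_mul]⟩
end

theorem one_sub_mem_closure_isUnit {𝕜 A : Type*} [RCLike 𝕜] [NormedRing A] [NormedAlgebra 𝕜 A]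
    [HasSummableGeomSeries A] {x : A} (hx : ‖x‖ ≤ 1) : 1 - x ∈ closure {u : A | IsUnit u} := by
  have hlim : Tendsto (fun t : ℝ ↦ 1 - (t : 𝕜) • x) (𝓝[<] 1) (𝓝 (1 - x)) := by
    have : Continuous fun t : ℝ ↦ 1 - (t : 𝕜) • x := by fun_prop
    simpa using this.continuousWithinAt.tendsto (x := 1) (s := Set.Iio 1)
  refine mem_closure_of_tendsto hlim ?_
  filter_upwards [Ioo_mem_nhdsLT zero_lt_one] with t ht
  refine isUnit_one_sub_of_norm_lt_one ?_
  calc ‖(t : 𝕜) • x‖ = t * ‖x‖ := by rw [norm_smul, RCLike.norm_ofReal, abs_of_pos ht.1]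
    _ ≤ t := mul_le_of_le_one_right ht.1.le hx
    _ < 1 := ht.2

/-- In a unital complex Banach algebra, for `x` with `‖x‖ ≤ 1`, left invertibility, right
invertibility, and invertibility of `1 - x` are all equivalent, and are equivalent to the
(closure of) either of the one-sided ideals `(1-x)A` and `A(1-x)` being all of `A`. -/
theorem tfae_one_sub_contractive_invertible
    {A : Type*} [NormedRing A] [NormedAlgebra ℂ A] [CompleteSpace A]
    (x : A) (hx : ‖x‖ ≤ 1) :
    List.TFAE
      [(∃ y : A, y * (1 - x) = 1),
       (∃ y : A, (1 - x) * y = 1),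
       {y : A | ∃ a : A, y = (1 - x) * a} = Set.univ,
       closure {y : A | ∃ a : A, y = (1 - x) * a} = Set.univ,
       {y : A | ∃ a : A, y = a * (1 - x)} = Set.univ,
       closure {y : A | ∃ a : A, y = a * (1 - x)} = Set.univ,
       IsUnit (1 - x)] := by
  have hx' : 1 - x ∈ closure {u : A | IsUnit u} := one_sub_mem_closure_isUnit (𝕜 := ℂ) hx
  tfae_have 1 → 7 := fun ⟨y, hy⟩ ↦ .of_mul_eq_one_right_of_mem_closure y hy hx'
  tfae_have 2 → 7 := fun ⟨y, hy⟩ ↦ .of_mul_eq_one_of_mem_closure y hy hx'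
  tfae_have 7 → 1 := IsUnit.exists_left_inv
  tfae_have 7 → 2 := IsUnit.exists_right_inv
  tfae_have 2 → 3 := fun ⟨y, hy⟩ ↦
    Set.eq_univ_of_forall fun b ↦ ⟨y * b, by rw [← mul_assoc, hy, one_mul]⟩
  tfae_have 1 → 5 := fun ⟨y, hy⟩ ↦
    Set.eq_univ_of_forall fun b ↦ ⟨b * y, by rw [mul_assoc, hy, mul_one]⟩
  tfae_have 3 → 4 := fun h ↦ by rw [h, closure_univ]
  tfae_have 5 → 6 := fun h ↦ by rw [h, closure_univ]
  tfae_have 4 → 2 := fun h ↦ exists_right_inv_of_one_mem_closure (h ▸ Set.mem_univ 1)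
  tfae_have 6 → 1 := fun h ↦ exists_left_inv_of_one_mem_closure (h ▸ Set.mem_univ 1)
  tfae_finish
end

section
/- Let A be a unital complex Banach algebra, let x ∈ A with ‖x‖ ≤ 1, and let B be the smallest norm-closed subalgebra of A containing 1 and x (equivalently, the topological closure of the unital subalgebra generated by x). Then 1 − x is invertible in A if and only if 1 − x is invertible in B; in particular, if 1 − x is invertible in A then its inverse (1−x)⁻¹ belongs to B. -/
/-!
For `‖c‖ < 1` the inverse of `1 - c • x` is the sum of the geometric series `∑ cⁿ xⁿ`, hence lies
in every closed subalgebra containing `x`. Letting `c → 1` inside the open unit disc,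
`(1 - c • x)⁻¹ → (1 - x)⁻¹` by continuity of inversion at the unit `1 - x`, so the inverse of
`1 - x` lies in that closed subalgebra too.
-/

open Filter Topology Metric

section

variable {𝕜 A : Type*} [RCLike 𝕜] [NormedRing A] [NormedAlgebra 𝕜 A] [CompleteSpace A]

theorem Subalgebra.inverse_one_sub_mem_of_norm_lt_one {S : Subalgebra 𝕜 A}
    (hS : IsClosed (S : Set A)) {x : A} (hxS : x ∈ S) (hx : ‖x‖ < 1) :
    Ring.inverse (1 - x) ∈ S :=
  hS.mem_of_tendsto (hasSum_geom_series_inverse x hx).tendsto_sum_nat <|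
    Eventually.of_forall fun _ ↦ Subalgebra.sum_mem _ fun i _ ↦ pow_mem hxS i

theorem Subalgebra.inv_mem_of_val_eq_one_sub {S : Subalgebra 𝕜 A}
    (hS : IsClosed (S : Set A)) {x : A} (hxS : x ∈ S) (hx : ‖x‖ ≤ 1)
    (u : Aˣ) (hu : (u : A) = 1 - x) : (↑u⁻¹ : A) ∈ S := by
  have hNeBot : (𝓝[ball 0 1] (1 : 𝕜)).NeBot :=
    mem_closure_iff_nhdsWithin_neBot.mp (by simp [closure_ball (0 : 𝕜) one_ne_zero])
  have hsub : Tendsto (fun c : 𝕜 ↦ 1 - c • x) (𝓝[ball 0 1] 1) (𝓝 (u : A)) := by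
    rw [hu]
    have hc : Tendsto (fun c : 𝕜 ↦ c) (𝓝[ball 0 1] 1) (𝓝 1) :=
      tendsto_nhdsWithin_of_tendsto_nhds tendsto_id
    simpa using (hc.smul_const x).const_sub 1
  have hlim :
      Tendsto (fun c : 𝕜 ↦ Ring.inverse (1 - c • x)) (𝓝[ball 0 1] 1) (𝓝 (↑u⁻¹ : A)) := by
    rw [← Ring.inverse_unit]
    exact (NormedRing.inverse_continuousAt u).tendsto.comp hsub
  refine hS.mem_of_tendsto hlim (eventually_nhdsWithin_of_forall fun c hc ↦ ?_)
  refine S.inverse_one_sub_mem_of_norm_lt_one hS (S.smul_mem hxS c) ?_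
  calc ‖c • x‖ = ‖c‖ * ‖x‖ := norm_smul c x
    _ ≤ ‖c‖ := mul_le_of_le_one_right (norm_nonneg c) hx
    _ < 1 := mem_ball_zero_iff.mp hc

end

/-- For `x` of norm at most one in a unital complex Banach algebra `A`, the element `1 - x`
is invertible in `A` iff it is invertible in the smallest norm-closed subalgebra `B` of `A`
containing `1` and `x`; in particular if `1 - x` is invertible then `(1-x)⁻¹ ∈ B`. -/
theorem one_sub_invertible_in_closed_subalgebra_generated
    {A : Type*} [NormedRing A] [NormedAlgebra ℂ A] [CompleteSpace A]
    (x : A) (hx : ‖x‖ ≤ 1) :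
    (IsUnit (1 - x) ↔
      ∃ y ∈ closure ((Algebra.adjoin ℂ {x} : Subalgebra ℂ A) : Set A),
        y * (1 - x) = 1 ∧ (1 - x) * y = 1) ∧
    (∀ y : A, y * (1 - x) = 1 → (1 - x) * y = 1 →
      y ∈ closure ((Algebra.adjoin ℂ {x} : Subalgebra ℂ A) : Set A)) := by
  set B := (Algebra.adjoin ℂ {x}).topologicalClosure
  have hB : closure ((Algebra.adjoin ℂ {x} : Subalgebra ℂ A) : Set A) = B :=
    (Subalgebra.topologicalClosure_coe _).symm
  have hxB : x ∈ B := Subalgebra.le_topologicalClosure _ (Algebra.self_mem_adjoin_singleton ℂ x)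
  have inv_mem (u : Aˣ) (hu : (u : A) = 1 - x) : (↑u⁻¹ : A) ∈ B :=
    B.inv_mem_of_val_eq_one_sub (Subalgebra.isClosed_topologicalClosure _) hxB hx u hu
  rw [hB]
  exact ⟨⟨fun ⟨u, hu⟩ ↦ ⟨↑u⁻¹, inv_mem u hu, hu ▸ u.inv_mul, hu ▸ u.mul_inv⟩,
      fun ⟨y, _, hy₁, hy₂⟩ ↦ ⟨⟨1 - x, y, hy₂, hy₁⟩, rfl⟩⟩,
    fun y hy₁ hy₂ ↦ inv_mem ⟨1 - x, y, hy₂, hy₁⟩ rfl⟩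
end

section
/- Let A be a unital complex Banach algebra with ‖1‖ = 1. The following are equivalent: (i) every 1-regular right ideal of A is trivial, i.e. equals {0} or A; (ii) for every a ∈ A which is not a scalar multiple of 1, the spectral radius of a is strictly less than ‖a‖; (iii) every x ∈ A with ‖x‖ ≤ 1 and x ≠ 1 is quasi-invertible, i.e. 1 − x is invertible in A. -/
open scoped ENNReal NNReal

/-!
(i) ⇔ (iii): if `1 - y` is invertible, a right ideal containing every `a - y * a` contains
`(1 - y) * ((1 - y)⁻¹ * z) = z` for all `z`. Conversely `(1 - x) * A` is a 1-regular right ideal,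
nonzero because `x ≠ 1`, so (i) makes it all of `A` and `1 - x` has a right inverse `b`. For
`‖x‖ ≤ 1` a right inverse is two-sided: `q = 1 - b * (1 - x)` is fixed by `x` and equals
`(1 - x) * (b * q)`, so `n • q = (1 - x ^ n) * (b * q)` stays bounded in `n`, forcing `q = 0`.

(ii) ⇔ (iii): `ρ(x) < ‖x‖ ≤ 1` puts `1` outside the spectrum of `x`. Conversely, if `ρ(a) = ‖a‖`,
some `k` in the spectrum of `a` has `‖k‖ = ‖a‖`, and `k⁻¹ • a` is an element of norm one with `1`
in its spectrum, so (iii) forces `k⁻¹ • a = 1`.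
-/

section PowerBounded

variable {R : Type*} [NormedRing R] [NormedSpace ℝ R]

theorem eq_zero_of_mul_eq_self_of_eq_one_sub_mul {x q d : R} {C : ℝ}
    (hpow : ∀ n : ℕ, ‖x ^ n‖ ≤ C) (hfix : x * q = q) (hq : q = (1 - x) * d) : q = 0 := by
  have hpow_fix : ∀ i : ℕ, x ^ i * q = q := by
    intro i
    induction i with
    | zero => rw [pow_zero, one_mul]
    | succ i ih => rw [pow_succ, mul_assoc, hfix, ih]
  have hbound : ∀ n : ℕ, (n : ℝ) * ‖q‖ ≤ 2 * C * ‖d‖ := by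
    intro n
    have hsum : n • q = (1 - x ^ n) * d := by
      calc n • q = ∑ i ∈ Finset.range n, x ^ i * q := by
            simp only [hpow_fix, Finset.sum_const, Finset.card_range]
        _ = (∑ i ∈ Finset.range n, x ^ i) * (1 - x) * d := by
            rw [← Finset.sum_mul, hq, mul_assoc]
        _ = (1 - x ^ n) * d := by rw [geom_sum_mul_neg]
    have hone_sub : ‖1 - x ^ n‖ ≤ 2 * C := by
      calc ‖1 - x ^ n‖ ≤ ‖x ^ 0‖ + ‖x ^ n‖ := by rw [pow_zero]; exact norm_sub_le _ _
        _ ≤ 2 * C := by linarith [hpow 0, hpow n]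
    calc (n : ℝ) * ‖q‖ = ‖n • q‖ := by rw [RCLike.norm_nsmul ℝ, nsmul_eq_mul]
      _ ≤ ‖1 - x ^ n‖ * ‖d‖ := hsum ▸ norm_mul_le _ _
      _ ≤ 2 * C * ‖d‖ := by gcongr
  by_contra hq0
  have hpos : 0 < ‖q‖ := norm_pos_iff.mpr hq0
  obtain ⟨n, hn⟩ := exists_nat_gt (2 * C * ‖d‖ / ‖q‖)
  rw [div_lt_iff₀ hpos] at hn
  linarith [hbound n]

theorem isUnit_one_sub_of_mul_eq_one {x b : R} {C : ℝ} (hpow : ∀ n : ℕ, ‖x ^ n‖ ≤ C)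
    (hb : (1 - x) * b = 1) : IsUnit (1 - x) := by
  set q := 1 - b * (1 - x) with hq_def
  have hfix : x * q = q := by
    have : (1 - x) * q = 0 := by rw [hq_def, mul_sub, ← mul_assoc, hb, one_mul, mul_one, sub_self]
    rwa [sub_mul, one_mul, sub_eq_zero, eq_comm] at this
  have hq : q = (1 - x) * (b * q) := by rw [← mul_assoc, hb, one_mul]
  have hba : b * (1 - x) = 1 :=
    (sub_eq_zero.mp (eq_zero_of_mul_eq_self_of_eq_one_sub_mul hpow hfix hq)).symm
  exact ⟨⟨1 - x, b, hb, hba⟩, rfl⟩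

theorem isUnit_one_sub_of_norm_le_one_of_mul_eq_one [NormOneClass R] {x b : R} (hx : ‖x‖ ≤ 1)
    (hb : (1 - x) * b = 1) : IsUnit (1 - x) :=
  isUnit_one_sub_of_mul_eq_one (fun n => (norm_pow_le x n).trans (pow_le_one₀ (norm_nonneg x) hx))
    hb

end PowerBounded

section Ideals

variable (𝕜 : Type*) {R : Type*} [CommSemiring 𝕜] [Semiring R] [Module 𝕜 R]

def IsRightIdealSet (S : Set R) : Prop :=
  (0 : R) ∈ S ∧ (∀ x ∈ S, ∀ y ∈ S, x + y ∈ S) ∧ (∀ (c : 𝕜), ∀ x ∈ S, c • x ∈ S) ∧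
    (∀ s ∈ S, ∀ a : R, s * a ∈ S)

theorem isRightIdealSet_range_mul_left [SMulCommClass 𝕜 R R] (c : R) :
    IsRightIdealSet 𝕜 (Set.range (c * ·)) := by
  refine ⟨⟨0, mul_zero c⟩, ?_, ?_, ?_⟩
  · rintro _ ⟨a, rfl⟩ _ ⟨b, rfl⟩
    exact ⟨a + b, mul_add c a b⟩
  · rintro k _ ⟨a, rfl⟩
    exact ⟨k • a, mul_smul_comm k c a⟩
  · rintro _ ⟨a, rfl⟩ b
    exact ⟨a * b, (mul_assoc c a b).symm⟩

end Ideals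

def IsOneRegular {R : Type*} [NormedRing R] (S : Set R) : Prop :=
  ∃ y : R, ‖y‖ ≤ 1 ∧ y ≠ 1 ∧ ∀ a : R, a - y * a ∈ S

theorem Set.eq_univ_of_forall_sub_mul_mem {R : Type*} [Ring R] {S : Set R} {y : R}
    (hy : IsUnit (1 - y)) (hS : ∀ a, a - y * a ∈ S) : S = Set.univ := by
  refine Set.eq_univ_of_forall fun z => ?_
  obtain ⟨u, hu⟩ := hy
  have hz := hS (↑u⁻¹ * z)
  rwa [← one_sub_mul, ← mul_assoc, ← hu, Units.mul_inv, one_mul] at hz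

section Scalars

variable {𝕜 A : Type*} [Field 𝕜] [Ring A] [Algebra 𝕜 A]

theorem isUnit_one_sub_smul_one {c : 𝕜} (hc : c ≠ 1) : IsUnit (1 - c • (1 : A)) := by
  rw [← Algebra.algebraMap_eq_smul_one, ← map_one (algebraMap 𝕜 A), ← map_sub]
  exact (sub_ne_zero.mpr hc.symm).isUnit.map _

theorem spectrum.not_isUnit_one_sub_inv_smul {a : A} {k : 𝕜} (hk : k ∈ spectrum 𝕜 a)
    (hk0 : k ≠ 0) : ¬IsUnit (1 - k⁻¹ • a) := by
  have : (1 : 𝕜) ∈ spectrum 𝕜 (k⁻¹ • a) := by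
    have h := (spectrum.smul_mem_smul_iff (r := (Units.mk0 k hk0)⁻¹)).mpr hk
    rwa [Units.smul_def, Units.smul_def, Units.val_inv_eq_inv_val, Units.val_mk0, smul_eq_mul,
      inv_mul_cancel₀ hk0] at h
  rwa [spectrum.mem_iff, map_one] at this

end Scalars

theorem spectrum.isUnit_one_sub_of_spectralRadius_lt_one {𝕜 A : Type*} [NontriviallyNormedField 𝕜]
    [NormedRing A] [NormedAlgebra 𝕜 A] {x : A} (h : spectralRadius 𝕜 x < 1) :
    IsUnit (1 - x) := by
  rw [← one_smul 𝕜 x]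
  exact spectrum.isUnit_one_sub_smul_of_lt_inv_radius (by simpa using h)

theorem isUnit_one_sub_of_forall_isOneRegular_trivial {𝕜 A : Type*} [CommSemiring 𝕜] [NormedRing A]
    [NormedSpace ℝ A] [NormOneClass A] [Module 𝕜 A] [SMulCommClass 𝕜 A A]
    (h : ∀ S : Set A, IsRightIdealSet 𝕜 S → IsOneRegular S → S = {0} ∨ S = Set.univ)
    {x : A} (hx : ‖x‖ ≤ 1) (hx1 : x ≠ 1) : IsUnit (1 - x) := by
  have hreg : IsOneRegular (Set.range ((1 - x) * ·)) :=
    ⟨x, hx, hx1, fun a => ⟨a, one_sub_mul x a⟩⟩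
  rcases h _ (isRightIdealSet_range_mul_left 𝕜 (1 - x)) hreg with hzero | huniv
  · have : 1 - x ∈ ({0} : Set A) := hzero ▸ ⟨1, mul_one _⟩
    exact absurd (sub_eq_zero.mp this).symm hx1
  · obtain ⟨b, hb⟩ : (1 : A) ∈ Set.range ((1 - x) * ·) := huniv ▸ Set.mem_univ 1
    exact isUnit_one_sub_of_norm_le_one_of_mul_eq_one hx hb

theorem isUnit_one_sub_of_forall_spectralRadius_lt {𝕜 A : Type*} [NontriviallyNormedField 𝕜]
    [NormedRing A] [NormedAlgebra 𝕜 A]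
    (h : ∀ a : A, (∀ c : 𝕜, a ≠ c • (1 : A)) → spectralRadius 𝕜 a < (‖a‖₊ : ℝ≥0∞))
    {x : A} (hx : ‖x‖ ≤ 1) (hx1 : x ≠ 1) : IsUnit (1 - x) := by
  by_cases hscalar : ∃ c : 𝕜, x = c • (1 : A)
  · obtain ⟨c, rfl⟩ := hscalar
    exact isUnit_one_sub_smul_one fun hc => hx1 (by rw [hc, one_smul])
  · push Not at hscalar
    refine spectrum.isUnit_one_sub_of_spectralRadius_lt_one ((h x hscalar).trans_le ?_)
    exact_mod_cast hx

theorem spectralRadius_lt_nnnorm_of_forall_isUnit_one_sub {A : Type*} [NormedRing A]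
    [NormedAlgebra ℂ A] [CompleteSpace A] [NormOneClass A]
    (h : ∀ x : A, ‖x‖ ≤ 1 → x ≠ 1 → IsUnit (1 - x))
    {a : A} (ha : ∀ c : ℂ, a ≠ c • (1 : A)) : spectralRadius ℂ a < ‖a‖₊ := by
  refine (spectrum.spectralRadius_le_nnnorm a).lt_of_ne fun heq => ?_
  have : Nontrivial A := NormOneClass.nontrivial
  obtain ⟨k, hk, hk_norm⟩ := spectrum.exists_nnnorm_eq_spectralRadius a
  have hnorm : ‖k‖ = ‖a‖ := by
    rw [← coe_nnnorm, ← coe_nnnorm]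
    exact_mod_cast hk_norm.trans heq
  have hk0 : k ≠ 0 := by
    rintro rfl
    exact ha 0 (by rw [zero_smul, ← norm_eq_zero, ← hnorm, norm_zero])
  have hx : ‖k⁻¹ • a‖ ≤ 1 := by
    rw [norm_smul, norm_inv, hnorm, inv_mul_cancel₀ (hnorm ▸ norm_ne_zero_iff.mpr hk0)]
  have hx1 : k⁻¹ • a = 1 := by
    by_contra hx1
    exact spectrum.not_isUnit_one_sub_inv_smul hk hk0 (h _ hx hx1)
  exact ha k ((inv_smul_eq_iff₀ hk0).mp hx1)


/-- In a unital complex Banach algebra with `‖1‖ = 1`: every 1-regular right ideal is trivial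
iff the spectral radius of every element which is not a scalar multiple of `1` is strictly
less than its norm, iff every `x` in the closed unit ball other than `1` is quasi-invertible
(i.e. `1 - x` is invertible). -/
theorem tfae_one_regular_right_ideals_trivial
    {A : Type*} [NormedRing A] [NormedAlgebra ℂ A] [CompleteSpace A] [NormOneClass A] :
    List.TFAE
      [∀ S : Set A,
          ((0 : A) ∈ S ∧ (∀ x ∈ S, ∀ y ∈ S, x + y ∈ S) ∧
            (∀ (c : ℂ), ∀ x ∈ S, c • x ∈ S) ∧ (∀ s ∈ S, ∀ a : A, s * a ∈ S)) →
          (∃ y : A, ‖y‖ ≤ 1 ∧ y ≠ 1 ∧ ∀ a : A, a - y * a ∈ S) →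
          (S = {0} ∨ S = Set.univ),
       ∀ a : A, (∀ c : ℂ, a ≠ c • (1 : A)) → spectralRadius ℂ a < (‖a‖₊ : ℝ≥0∞),
       ∀ x : A, ‖x‖ ≤ 1 → x ≠ 1 → IsUnit (1 - x)] := by
  tfae_have 1 → 3 := fun h _ => isUnit_one_sub_of_forall_isOneRegular_trivial (𝕜 := ℂ) h
  tfae_have 3 → 1 := fun h _ _ ⟨y, hy, hy1, hS⟩ =>
    Or.inr (Set.eq_univ_of_forall_sub_mul_mem (h y hy hy1) hS)
  tfae_have 2 → 3 := fun h _ => isUnit_one_sub_of_forall_spectralRadius_lt h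
  tfae_have 3 → 2 := fun h _ => spectralRadius_lt_nnnorm_of_forall_isUnit_one_sub h
  tfae_finish
end

section
/- Let H be a complex Hilbert space, let A be a norm-closed subalgebra of B(H) containing the identity operator 1, and let x ∈ A with ‖x‖ ≤ 1. Then 1 − x is invertible in A (i.e. there exists y ∈ A with y(1−x) = 1 and (1−x)y = 1) if and only if ‖1 + x‖ < 2. -/
/-!
If `1 - x` has an inverse then `‖(1 - x) ξ‖ ≥ c ‖ξ‖` for some `c > 0`, and the parallelogram law
together with `‖x ξ‖ ≤ ‖ξ‖` gives `‖(1 + x) ξ‖² ≤ (4 - c²) ‖ξ‖²`, so `‖1 + x‖ < 2`. Conversely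
`1 - x = 2 (1 - z)` with `z = (1 + x) / 2` of norm `< 1`, and the Neumann series of `(1 - z)⁻¹`
converges in the closed algebra `A`.
-/

variable {H : Type*} [NormedAddCommGroup H] [InnerProductSpace ℂ H] [CompleteSpace H]

def IsClosedSubalgebraSet.toSubalgebra {A : Set (H →L[ℂ] H)} (hA : IsClosedSubalgebraSet A)
    (h1 : (1 : H →L[ℂ] H) ∈ A) : Subalgebra ℂ (H →L[ℂ] H) where
  carrier := A
  mul_mem' {a b} ha hb := hA.2.2.2.2 a ha b hb
  add_mem' {a b} ha hb := hA.2.2.1 a ha b hb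
  algebraMap_mem' c := by simpa [Algebra.algebraMap_eq_smul_one] using hA.2.2.2.1 c _ h1

theorem Subring.exists_inverse_one_sub_mem {R : Type*} [NormedRing R] [CompleteSpace R]
    (S : Subring R) (hS : IsClosed (S : Set R)) {t : R} (ht : t ∈ S) (hnorm : ‖t‖ < 1) :
    ∃ y ∈ S, y * (1 - t) = 1 ∧ (1 - t) * y = 1 := by
  have : CompleteSpace S := hS.completeSpace_coe
  have hunit : IsUnit (1 - ⟨t, ht⟩ : S) := (Units.oneSub (⟨t, ht⟩ : S) hnorm).isUnit
  obtain ⟨y, hy, hy'⟩ := isUnit_iff_exists.mp hunit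
  exact ⟨y, y.2, by simpa using congrArg ((↑) : S → R) hy',
    by simpa using congrArg ((↑) : S → R) hy⟩

theorem ContinuousLinearMap.exists_pos_mul_norm_le_of_mul_eq_one {𝕜 E : Type*}
    [NontriviallyNormedField 𝕜] [NormedAddCommGroup E] [NormedSpace 𝕜 E]
    {S y : E →L[𝕜] E} (h : y * S = 1) : ∃ c > 0, ∀ ξ, c * ‖ξ‖ ≤ ‖S ξ‖ := by
  refine ⟨(‖y‖ + 1)⁻¹, by positivity, fun ξ => ?_⟩
  rw [inv_mul_le_iff₀ (by positivity)]
  calc ‖ξ‖ = ‖y (S ξ)‖ := by rw [← mul_apply_eq_comp, h, one_apply_eq_self]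
    _ ≤ ‖y‖ * ‖S ξ‖ := y.le_opNorm _
    _ ≤ (‖y‖ + 1) * ‖S ξ‖ := by gcongr; linarith

theorem norm_add_sq_add_norm_sub_sq_le (𝕜 : Type*) {E : Type*} [RCLike 𝕜] [NormedAddCommGroup E]
    [InnerProductSpace 𝕜 E] {u v : E} (h : ‖v‖ ≤ ‖u‖) :
    ‖u + v‖ ^ 2 + ‖u - v‖ ^ 2 ≤ 4 * ‖u‖ ^ 2 := by
  have := parallelogram_law_with_norm 𝕜 u v
  nlinarith [norm_nonneg u, norm_nonneg v]

theorem ContinuousLinearMap.norm_one_add_lt_two_of_bounded_below {𝕜 E : Type*} [RCLike 𝕜]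
    [NormedAddCommGroup E] [InnerProductSpace 𝕜 E] {T : E →L[𝕜] E} (hT : ‖T‖ ≤ 1)
    {c : ℝ} (hc : 0 < c) (hbelow : ∀ ξ, c * ‖ξ‖ ≤ ‖(1 - T) ξ‖) : ‖1 + T‖ < 2 := by
  have hsq (ξ : E) : ‖(1 + T) ξ‖ ^ 2 ≤ (4 - c ^ 2) * ‖ξ‖ ^ 2 := by
    have hTξ : ‖T ξ‖ ≤ ‖ξ‖ := T.le_of_opNorm_le hT ξ |>.trans_eq (one_mul _)
    have hpar := norm_add_sq_add_norm_sub_sq_le 𝕜 hTξ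
    have hb := hbelow ξ
    simp only [add_apply, sub_apply, one_apply_eq_self] at hb ⊢
    nlinarith [norm_nonneg ξ, mul_nonneg hc.le (norm_nonneg ξ)]
  calc ‖1 + T‖ ≤ √(4 - c ^ 2) := by
        refine opNorm_le_bound _ (Real.sqrt_nonneg _) fun ξ => ?_
        rw [← Real.sqrt_sq (norm_nonneg ((1 + T) ξ)), ← Real.sqrt_sq (norm_nonneg ξ),
          ← Real.sqrt_mul' _ (sq_nonneg _)]
        exact Real.sqrt_le_sqrt (hsq ξ)
    _ < 2 := by rw [Real.sqrt_lt' two_pos]; nlinarith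

/-- For `x` of norm at most one in a unital operator algebra `A ⊆ B(H)`, the element
`1 - x` is invertible in `A` iff `‖1 + x‖ < 2`. -/
theorem one_sub_invertible_iff_norm_one_add_lt_two
    (A : Set (H →L[ℂ] H)) (hA : IsClosedSubalgebraSet A)
    (h1 : (1 : H →L[ℂ] H) ∈ A)
    (x : H →L[ℂ] H) (hxA : x ∈ A) (hx : ‖x‖ ≤ 1) :
    (∃ y ∈ A, y * (1 - x) = 1 ∧ (1 - x) * y = 1) ↔ ‖1 + x‖ < 2 := by
  have ⟨hclosed, _, hadd, hsmul, _⟩ := hA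
  constructor
  · rintro ⟨y, -, hy, -⟩
    obtain ⟨c, hc, hbelow⟩ := ContinuousLinearMap.exists_pos_mul_norm_le_of_mul_eq_one hy
    exact ContinuousLinearMap.norm_one_add_lt_two_of_bounded_below hx hc hbelow
  · intro h
    set z : H →L[ℂ] H := (2 : ℂ)⁻¹ • (1 + x) with hz_def
    have hz : ‖z‖ < 1 := by
      rw [hz_def, norm_smul, norm_inv, Complex.norm_ofNat]
      linarith
    obtain ⟨w, hwA, hw, hw'⟩ := (hA.toSubalgebra h1).toSubring.exists_inverse_one_sub_mem
      (by exact hclosed) (hsmul _ _ (hadd _ h1 _ hxA)) hz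
    have hx_eq : 1 - x = (2 : ℂ) • (1 - z) := by
      rw [hz_def, smul_sub, smul_smul, mul_inv_cancel₀ two_ne_zero, one_smul, two_smul]
      abel
    refine ⟨(2 : ℂ)⁻¹ • w, hsmul _ _ hwA, ?_, ?_⟩
    · rw [hx_eq, smul_mul_smul, hw]; norm_num
    · rw [hx_eq, smul_mul_smul, hw']; norm_num
end

section
/- Let H be a complex Hilbert space and let A be a norm-closed subalgebra of B(H) containing the identity operator 1. The following are equivalent: (i) for every a ∈ A which is not a scalar multiple of 1, the spectral radius of a is strictly less than ‖a‖; (ii) for every x ∈ A with ‖x‖ ≤ 1 and x ≠ 1, one has ‖1 + x‖ < 2; (iii) for every x ∈ A which is not a scalar multiple of 1, the numerical radius ν(x) := sup{ |⟨x ξ, ξ⟩| : ξ ∈ H, ‖ξ‖ = 1 } is strictly less than ‖x‖. -/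
open scoped ENNReal NNReal

variable {H : Type*} [NormedAddCommGroup H] [InnerProductSpace ℂ H] [CompleteSpace H]

/-- The numerical radius of a bounded operator `x` on a Hilbert space:
the supremum of `|⟨x ξ, ξ⟩|` over unit vectors `ξ`. -/
noncomputable def numericalRadius (x : H →L[ℂ] H) : ℝ :=
  sSup {r : ℝ | ∃ ξ : H, ‖ξ‖ = 1 ∧ r = ‖(inner ℂ (x ξ) ξ : ℂ)‖}

/-!
(i) ⇒ (ii): if `‖x‖ ≤ 1` and `‖1 + x‖ = 2`, the parallelogram law turns unit vectors almost
normed by `1 + x` into approximate eigenvectors of `x` for the value `1`. So `2 ∈ σ(1 + x)` and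
`r(1 + x) = ‖1 + x‖`, whence `1 + x` is a scalar, necessarily `2`, i.e. `x = 1`.

(ii) ⇒ (iii): if `ν(x) = ‖x‖`, compactness gives `c` in the closure of the numerical range with
`|c| = ‖x‖`. Then `y = c̄⁻¹ x` has norm one and `1 + c⁻¹ c = 2` lies in the closure of the numerical
range of `1 + y`, so `‖1 + y‖ = 2`.

(iii) ⇒ (i): if `|λ| > ν(a)` then `|⟪(λ - a) ξ, ξ⟫| ≥ (|λ| - ν(a)) ‖ξ‖²`, which makes `λ - a`
invertible as in the Lax–Milgram theorem. Hence `r(a) ≤ ν(a)`.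
-/

section ApproxEigenvalue

variable {𝕜 E : Type*} [NontriviallyNormedField 𝕜] [NormedAddCommGroup E] [NormedSpace 𝕜 E]

/-- `k` lies in the approximate point spectrum of `a`. -/
def IsApproxEigenvalue (a : E →L[𝕜] E) (k : 𝕜) : Prop :=
  ∀ ε > (0 : ℝ), ∃ ξ : E, ‖ξ‖ = 1 ∧ ‖a ξ - k • ξ‖ < ε

theorem IsApproxEigenvalue.one_add {a : E →L[𝕜] E} {k : 𝕜} (h : IsApproxEigenvalue a k) :
    IsApproxEigenvalue (1 + a) (1 + k) := by
  intro ε hε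
  obtain ⟨ξ, hξ, hlt⟩ := h ε hε
  refine ⟨ξ, hξ, ?_⟩
  convert hlt using 2
  simp only [add_apply, one_apply_eq_self, add_smul, one_smul]
  abel

theorem IsApproxEigenvalue.mem_spectrum {a : E →L[𝕜] E} {k : 𝕜} (h : IsApproxEigenvalue a k) :
    k ∈ spectrum 𝕜 a := by
  rintro ⟨u, hu⟩
  set b : E →L[𝕜] E := ↑u⁻¹
  obtain ⟨ξ, hξ, hlt⟩ := h (‖b‖ + 1)⁻¹ (by positivity)
  have hinv : b ((u : E →L[𝕜] E) ξ) = ξ := by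
    rw [← mul_apply_eq_comp, Units.inv_mul, one_apply_eq_self]
  have hu_apply : ‖(u : E →L[𝕜] E) ξ‖ = ‖a ξ - k • ξ‖ := by
    rw [hu, ← norm_neg]
    simp [Algebra.algebraMap_eq_smul_one]
  have : (1 : ℝ) < 1 := calc
    1 = ‖b ((u : E →L[𝕜] E) ξ)‖ := by rw [hinv, hξ]
    _ ≤ ‖b‖ * ‖(u : E →L[𝕜] E) ξ‖ := b.le_opNorm _
    _ ≤ ‖b‖ * (‖b‖ + 1)⁻¹ := by rw [hu_apply]; gcongr
    _ < 1 := by rw [mul_inv_lt_iff₀ (by positivity)]; linarith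
  exact lt_irrefl _ this

theorem norm_one_add_le_two_of_norm_le_one {x : E →L[𝕜] E} (hx : ‖x‖ ≤ 1) : ‖1 + x‖ ≤ 2 :=
  calc ‖1 + x‖ ≤ ‖(1 : E →L[𝕜] E)‖ + ‖x‖ := norm_add_le _ _
    _ ≤ 1 + 1 := add_le_add ContinuousLinearMap.norm_id_le hx
    _ = 2 := one_add_one_eq_two

end ApproxEigenvalue

theorem norm_sub_sq_le_four_sub_norm_add_sq (𝕜 : Type*) {E : Type*} [RCLike 𝕜]
    [NormedAddCommGroup E] [InnerProductSpace 𝕜 E] {u v : E} (hu : ‖u‖ ≤ 1) (hv : ‖v‖ ≤ 1) :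
    ‖u - v‖ ^ 2 ≤ 4 - ‖u + v‖ ^ 2 := by
  have := parallelogram_law_with_norm 𝕜 u v
  nlinarith [norm_nonneg u, norm_nonneg v]

section RCLike

variable {𝕜 E : Type*} [RCLike 𝕜] [NormedAddCommGroup E]

theorem ContinuousLinearMap.exists_norm_eq_one_lt_norm_apply [NormedSpace 𝕜 E]
    (f : E →L[𝕜] E) {r : ℝ} (hr₀ : 0 ≤ r) (hr : r < ‖f‖) : ∃ ξ : E, ‖ξ‖ = 1 ∧ r < ‖f ξ‖ := by
  lift r to ℝ≥0 using hr₀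
  obtain ⟨ξ, hξ, hlt⟩ := f.exists_nnnorm_eq_one_lt_apply_of_lt_opNNNorm (r := r) hr
  exact ⟨ξ, congrArg NNReal.toReal hξ, hlt⟩

variable [InnerProductSpace 𝕜 E]

theorem isApproxEigenvalue_one_of_two_le_norm_one_add {x : E →L[𝕜] E} (hx : ‖x‖ ≤ 1)
    (h2 : 2 ≤ ‖1 + x‖) : IsApproxEigenvalue x 1 := by
  intro ε hε
  set δ := min 1 (ε ^ 2 / 4)
  have hδ : 0 < δ := by positivity
  have hδ1 : δ ≤ 1 := min_le_left _ _
  have hδε : δ ≤ ε ^ 2 / 4 := min_le_right _ _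
  obtain ⟨ξ, hξ, hlt⟩ :=
    (1 + x).exists_norm_eq_one_lt_norm_apply (r := 2 - δ) (by linarith) (by linarith)
  refine ⟨ξ, hξ, ?_⟩
  rw [one_smul, ← norm_neg, neg_sub]
  have hxξ : ‖x ξ‖ ≤ 1 := (x.unit_le_opNorm ξ hξ.le).trans hx
  have hpar := norm_sub_sq_le_four_sub_norm_add_sq 𝕜 hξ.le hxξ
  rw [add_apply, one_apply_eq_self] at hlt
  have : ‖ξ - x ξ‖ ^ 2 < ε ^ 2 := by nlinarith
  exact lt_of_pow_lt_pow_left₀ 2 hε.le this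

end RCLike

variable {E : Type*} [NormedAddCommGroup E] [InnerProductSpace ℂ E]

/-- Mathlib's `inner` is conjugate-linear in its first argument, so this is the complex conjugate
of the usual numerical range; its moduli are those in `numericalRadius`. -/
def numericalRange (x : E →L[ℂ] E) : Set ℂ :=
  {w | ∃ ξ : E, ‖ξ‖ = 1 ∧ w = inner ℂ (x ξ) ξ}

theorem numericalRange_subset_closedBall (x : E →L[ℂ] E) :
    numericalRange x ⊆ Metric.closedBall 0 ‖x‖ := by
  rintro w ⟨ξ, hξ, rfl⟩
  rw [mem_closedBall_zero_iff]
  calc ‖inner ℂ (x ξ) ξ‖ ≤ ‖x ξ‖ * ‖ξ‖ := norm_inner_le_norm _ _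
    _ ≤ ‖x‖ := by rw [hξ, mul_one]; exact x.unit_le_opNorm ξ hξ.le

theorem norm_le_of_mem_closure_numericalRange {x : E →L[ℂ] E} {w : ℂ}
    (hw : w ∈ closure (numericalRange x)) : ‖w‖ ≤ ‖x‖ :=
  mem_closedBall_zero_iff.1 <|
    closure_minimal (numericalRange_subset_closedBall x) Metric.isClosed_closedBall hw

theorem norm_le_numericalRadius {x : E →L[ℂ] E} {w : ℂ} (hw : w ∈ numericalRange x) :
    ‖w‖ ≤ numericalRadius x := by
  obtain ⟨ξ, hξ, rfl⟩ := hw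
  refine le_csSup ⟨‖x‖, ?_⟩ ⟨ξ, hξ, rfl⟩
  rintro r ⟨η, hη, rfl⟩
  exact mem_closedBall_zero_iff.1 (numericalRange_subset_closedBall x ⟨η, hη, rfl⟩)

theorem exists_mem_closure_numericalRange_numericalRadius_le_norm [Nontrivial E]
    (x : E →L[ℂ] E) : ∃ c ∈ closure (numericalRange x), numericalRadius x ≤ ‖c‖ := by
  have hcompact : IsCompact (closure (numericalRange x)) :=
    (isCompact_closedBall 0 ‖x‖).of_isClosed_subset isClosed_closure
      (closure_minimal (numericalRange_subset_closedBall x) Metric.isClosed_closedBall)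
  obtain ⟨ξ, hξ⟩ := exists_norm_eq E zero_le_one
  have hne : (numericalRange x).Nonempty := ⟨_, ξ, hξ, rfl⟩
  obtain ⟨c, hc, hmax⟩ := hcompact.exists_isMaxOn hne.closure continuous_norm.continuousOn
  refine ⟨c, hc, csSup_le ⟨_, ξ, hξ, rfl⟩ ?_⟩
  rintro r ⟨η, hη, rfl⟩
  exact hmax (subset_closure ⟨η, hη, rfl⟩)

theorem mem_closure_numericalRange_one_add_smul {x : E →L[ℂ] E} {c : ℂ}
    (hc : c ∈ closure (numericalRange x)) (μ : ℂ) :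
    1 + μ * c ∈ closure (numericalRange (1 + starRingEnd ℂ μ • x)) := by
  have hmaps : (fun w ↦ 1 + μ * w) '' numericalRange x ⊆
      numericalRange (1 + starRingEnd ℂ μ • x) := by
    rintro _ ⟨_, ⟨ξ, hξ, rfl⟩, rfl⟩
    refine ⟨ξ, hξ, ?_⟩
    simp [hξ, mul_comm]
  exact closure_mono hmaps
    (image_closure_subset_closure_image (by fun_prop) (Set.mem_image_of_mem _ hc))

theorem numericalRadius_nonneg (x : E →L[ℂ] E) : 0 ≤ numericalRadius x :=
  Real.sSup_nonneg fun _ ⟨_, _, hr⟩ ↦ hr ▸ norm_nonneg _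

theorem norm_inner_apply_self_le (x : E →L[ℂ] E) (ξ : E) :
    ‖inner ℂ (x ξ) ξ‖ ≤ numericalRadius x * ‖ξ‖ ^ 2 := by
  rcases eq_or_ne ξ 0 with rfl | hξ
  · simp
  set η : E := (‖ξ‖ : ℂ)⁻¹ • ξ
  have hη : ‖η‖ = 1 := by simp [η, norm_smul, hξ]
  have hξη : ξ = (‖ξ‖ : ℂ) • η := by simp [η, smul_smul, hξ]
  have key : ‖inner ℂ (x ξ) ξ‖ = ‖inner ℂ (x η) η‖ * ‖ξ‖ ^ 2 := by
    conv_lhs => rw [hξη]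
    simp
    ring
  rw [key]
  gcongr
  exact norm_le_numericalRadius ⟨η, hη, rfl⟩

theorem norm_le_numericalRadius_of_mem_spectrum [CompleteSpace E] {a : E →L[ℂ] E} {k : ℂ}
    (hk : k ∈ spectrum ℂ a) : ‖k‖ ≤ numericalRadius a := by
  by_contra! hlt
  refine hk <| ContinuousLinearMap.isUnit_of_forall_le_norm_inner_map _
    (c := ⟨‖k‖ - numericalRadius a, (sub_pos.2 hlt).le⟩) (sub_pos.2 hlt) fun ξ ↦ ?_
  have hinner : inner ℂ ((algebraMap ℂ (E →L[ℂ] E) k - a) ξ) ξ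
      = starRingEnd ℂ k * (‖ξ‖ : ℂ) ^ 2 - inner ℂ (a ξ) ξ := by
    simp [Algebra.algebraMap_eq_smul_one, inner_self_eq_norm_sq_to_K, mul_comm]
  rw [hinner]
  calc ‖ξ‖ ^ 2 * (‖k‖ - numericalRadius a)
      ≤ ‖starRingEnd ℂ k * (‖ξ‖ : ℂ) ^ 2‖ - ‖inner ℂ (a ξ) ξ‖ := by
        simp only [norm_mul, RCLike.norm_conj, norm_pow, Complex.norm_real, norm_norm]
        linarith [norm_inner_apply_self_le a ξ]
    _ ≤ _ := norm_sub_norm_le _ _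

theorem spectralRadius_le_numericalRadius [CompleteSpace E] (a : E →L[ℂ] E) :
    spectralRadius ℂ a ≤ ENNReal.ofReal (numericalRadius a) :=
  iSup₂_le fun _ hk ↦ by
    rw [← ENNReal.ofReal_coe_nnreal, coe_nnnorm]
    exact ENNReal.ofReal_le_ofReal (norm_le_numericalRadius_of_mem_spectrum hk)

theorem spectralRadius_lt_nnnorm_of_numericalRadius_lt_norm [CompleteSpace E] {a : E →L[ℂ] E}
    (h : numericalRadius a < ‖a‖) : spectralRadius ℂ a < ‖a‖₊ := by
  have ha : 0 < ‖a‖ := (numericalRadius_nonneg a).trans_lt h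
  calc spectralRadius ℂ a ≤ ENNReal.ofReal (numericalRadius a) :=
        spectralRadius_le_numericalRadius a
    _ < ENNReal.ofReal ‖a‖ := ENNReal.ofReal_lt_ofReal_iff'.2 ⟨h, ha⟩
    _ = ‖a‖₊ := by rw [← ENNReal.ofReal_coe_nnreal, coe_nnnorm]

theorem norm_one_add_lt_two_of_spectralRadius_lt_nnnorm [CompleteSpace E]
    (A : Set (E →L[ℂ] E)) (hA : ∀ x ∈ A, 1 + x ∈ A)
    (h : ∀ a ∈ A, (∀ c : ℂ, a ≠ c • (1 : E →L[ℂ] E)) → spectralRadius ℂ a < (‖a‖₊ : ℝ≥0∞)) :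
    ∀ x ∈ A, ‖x‖ ≤ 1 → x ≠ 1 → ‖1 + x‖ < 2 := by
  intro x hxA hx hx1
  by_contra! h2
  have hspec : (2 : ℂ) ∈ spectrum ℂ (1 + x) := by
    simpa [one_add_one_eq_two] using
      (isApproxEigenvalue_one_of_two_le_norm_one_add hx h2).one_add.mem_spectrum
  by_cases hscalar : ∃ c : ℂ, 1 + x = c • 1
  · obtain ⟨c, hc⟩ := hscalar
    have : Nontrivial (E →L[ℂ] E) := by
      rcases subsingleton_or_nontrivial (E →L[ℂ] E) with _ | hE
      · simp [spectrum.of_subsingleton] at hspec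
      · exact hE
    rw [hc, ← Algebra.algebraMap_eq_smul_one, spectrum.scalar_eq, Set.mem_singleton_iff] at hspec
    subst hspec
    apply hx1
    rwa [two_smul, add_right_inj] at hc
  · push Not at hscalar
    refine (h _ (hA x hxA) hscalar).not_ge ?_
    calc (‖1 + x‖₊ : ℝ≥0∞) ≤ ‖(2 : ℂ)‖₊ := by
          rw [ENNReal.coe_le_coe, ← NNReal.coe_le_coe, coe_nnnorm, coe_nnnorm, Complex.norm_two]
          exact norm_one_add_le_two_of_norm_le_one hx
      _ ≤ spectralRadius ℂ (1 + x) := le_iSup₂ (f := fun k _ ↦ (‖k‖₊ : ℝ≥0∞)) _ hspec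

theorem numericalRadius_lt_norm_of_norm_one_add_lt_two (A : Set (E →L[ℂ] E))
    (hA : ∀ c : ℂ, ∀ x ∈ A, c • x ∈ A)
    (h : ∀ x ∈ A, ‖x‖ ≤ 1 → x ≠ 1 → ‖1 + x‖ < 2) :
    ∀ x ∈ A, (∀ c : ℂ, x ≠ c • (1 : E →L[ℂ] E)) → numericalRadius x < ‖x‖ := by
  intro x hxA hx
  by_contra! hν
  have hx0 : x ≠ 0 := by simpa using hx 0
  obtain ⟨ξ, hξ⟩ : ∃ ξ, x ξ ≠ 0 := DFunLike.ne_iff.1 hx0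
  have : Nontrivial E := ⟨ξ, 0, fun h ↦ hξ (by rw [h, map_zero])⟩
  obtain ⟨c, hcW, hνc⟩ := exists_mem_closure_numericalRange_numericalRadius_le_norm x
  have hcx : ‖c‖ = ‖x‖ := le_antisymm (norm_le_of_mem_closure_numericalRange hcW) (hν.trans hνc)
  have hc0 : c ≠ 0 := by
    rw [← norm_pos_iff, hcx]
    exact norm_pos_iff.2 hx0
  set y := starRingEnd ℂ c⁻¹ • x
  have hy : ‖y‖ = 1 := by
    rw [norm_smul, RCLike.norm_conj, norm_inv, hcx, inv_mul_cancel₀ (norm_ne_zero_iff.2 hx0)]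
  have hy1 : y ≠ 1 := by
    intro hy1
    apply hx (starRingEnd ℂ c)
    rw [← hy1, smul_smul, ← map_mul, mul_inv_cancel₀ hc0, map_one, one_smul]
  have h2 : 2 ≤ ‖1 + y‖ := by
    have := norm_le_of_mem_closure_numericalRange (mem_closure_numericalRange_one_add_smul hcW c⁻¹)
    rwa [inv_mul_cancel₀ hc0, one_add_one_eq_two, Complex.norm_two] at this
  exact (h y (hA _ x hxA) hy.le hy1).not_ge h2

/-- For a unital operator algebra `A ⊆ B(H)`, the following are equivalent:
every element which is not a scalar multiple of `1` has spectral radius strictly less than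
its norm; every `x ∈ Ball(A)` with `x ≠ 1` satisfies `‖1 + x‖ < 2`; every element which is
not a scalar multiple of `1` has numerical radius strictly less than its norm. -/
theorem tfae_spectral_norm_numerical
    (A : Set (H →L[ℂ] H)) (hA : IsClosedSubalgebraSet A)
    (h1 : (1 : H →L[ℂ] H) ∈ A) :
    List.TFAE
      [∀ a ∈ A, (∀ c : ℂ, a ≠ c • (1 : H →L[ℂ] H)) →
          spectralRadius ℂ a < (‖a‖₊ : ℝ≥0∞),
       ∀ x ∈ A, ‖x‖ ≤ 1 → x ≠ (1 : H →L[ℂ] H) → ‖1 + x‖ < 2,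
       ∀ x ∈ A, (∀ c : ℂ, x ≠ c • (1 : H →L[ℂ] H)) → numericalRadius x < ‖x‖] := by
  obtain ⟨-, -, hadd, hsmul, -⟩ := hA
  tfae_have 1 → 2 := norm_one_add_lt_two_of_spectralRadius_lt_nnnorm A (hadd 1 h1)
  tfae_have 2 → 3 := numericalRadius_lt_norm_of_norm_one_add_lt_two A hsmul
  tfae_have 3 → 1 := fun h a ha hscalar ↦
    spectralRadius_lt_nnnorm_of_numericalRadius_lt_norm (h a ha hscalar)
  tfae_finish
end

section
/- Let K be a complex Hilbert space and let (T_k)_{k ∈ ℕ} be a sequence of invertible bounded operators on K with T_0 = id_K. Let H be the ℓ²-direct sum of countably many copies of K, and for j ∈ ℕ let T_{0j} ∈ B(H) be the bounded operator sending (ξ_n)_{n ∈ ℕ} to the vector whose 0-th entry is T_j ξ_j and whose other entries are 0. Then for every n ∈ ℕ and all scalars α_0, …, α_n ∈ ℂ one has ‖Σ_{k=0}^n α_k T_{0k}‖² = ‖Σ_{k=0}^n |α_k|² T_k T_k^*‖, where the first norm is in B(H) and the second in B(K). Consequently, for n ≤ m, ‖Σ_{k=0}^n α_k T_{0k}‖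 ≤ ‖Σ_{k=0}^m α_k T_{0k}‖ (so (T_{0k})_k is a monotone basic sequence). -/
/-!
Write `ι₀ : K → ℓ²(ℕ, K)` for the isometric embedding into the `0`-th coordinate and `ev_k`
for the `k`-th coordinate. The hypothesis on `T0j` says `T_{0k} = ι₀ ∘ T_k ∘ ev_k`, so
`Σ_{k ≤ n} α_k T_{0k} = ι₀ ∘ R` for the row operator `R ξ = Σ_{k ≤ n} α_k T_k ξ_k`, and its norm
is `‖R‖`. By the C⋆-identity `‖R‖² = ‖R R^*‖`, and as the adjoint of `ev_k` is the embedding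
into the `k`-th coordinate, `R R^* = Σ_{k ≤ n} |α_k|² T_k T_k^*`. These operators are positive
and increase with `n`, and the norm is monotone on positive operators, which gives the
monotonicity.
-/

noncomputable section

open ContinuousLinearMap
open scoped InnerProduct

namespace lp

section Single

variable {𝕜 ι X : Type*} [RCLike 𝕜] [DecidableEq ι] {G : ι → Type*}
  [∀ i, NormedAddCommGroup (G i)] [∀ i, InnerProductSpace 𝕜 (G i)]
  [NormedAddCommGroup X] [NormedSpace 𝕜 X]

theorem norm_singleContinuousLinearMap_comp (i : ι) (A : X →L[𝕜] G i) :
    ‖singleContinuousLinearMap 𝕜 G 2 i ∘L A‖ = ‖A‖ :=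
  opNorm_ext _ _ fun x => lp.norm_single (by norm_num) i (A x)

theorem eq_singleContinuousLinearMap_comp {E : Type*} [NormedAddCommGroup E]
    [InnerProductSpace 𝕜 E] (i : ι) (A : X →L[𝕜] lp (fun _ : ι => E) 2) (B : X →L[𝕜] E)
    (hA : ∀ x j, A x j = if j = i then B x else 0) :
    A = singleContinuousLinearMap 𝕜 (fun _ => E) 2 i ∘L B := by
  ext x j
  rw [hA, comp_apply, singleContinuousLinearMap_apply, lp.single_apply, Pi.single_apply]

theorem adjoint_evalCLM [∀ i, CompleteSpace (G i)] (i : ι) :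
    (evalCLM 𝕜 G 2 i)† = singleContinuousLinearMap 𝕜 G 2 i :=
  ((eq_adjoint_iff _ _).2 fun x f => inner_single_left i x f).symm

end Single

end lp

section RowOperator

variable {𝕜 ι E F : Type*} [RCLike 𝕜] [DecidableEq ι]
  [NormedAddCommGroup E] [InnerProductSpace 𝕜 E] [NormedAddCommGroup F] [InnerProductSpace 𝕜 F]

def rowOperator (T : ι → E →L[𝕜] F) (α : ι → 𝕜) (s : Finset ι) :
    lp (fun _ : ι => E) 2 →L[𝕜] F :=
  ∑ k ∈ s, α k • (T k ∘L lp.evalCLM 𝕜 (fun _ => E) 2 k)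

theorem rowOperator_comp_single (T : ι → E →L[𝕜] F) (α : ι → 𝕜) {s : Finset ι} {l : ι}
    (hl : l ∈ s) :
    rowOperator T α s ∘L lp.singleContinuousLinearMap 𝕜 (fun _ => E) 2 l = α l • T l := by
  ext x
  rw [rowOperator, comp_apply, sum_apply, Finset.sum_eq_single_of_mem l hl]
  · simp [lp.evalCLM]
  · intro k _ hkl
    simp [lp.evalCLM, hkl]

variable [CompleteSpace E] [CompleteSpace F]

theorem rowOperator_comp_adjoint (T : ι → E →L[𝕜] F) (α : ι → 𝕜) (s : Finset ι) :
    rowOperator T α s ∘L (rowOperator T α s)† = ∑ k ∈ s, ((‖α k‖ : 𝕜) ^ 2) • (T k ∘L (T k)†) := by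
  have hadj : (rowOperator T α s)† = ∑ k ∈ s,
      starRingEnd 𝕜 (α k) • (lp.singleContinuousLinearMap 𝕜 (fun _ => E) 2 k ∘L (T k)†) := by
    simp only [rowOperator, map_sum, map_smulₛₗ, adjoint_comp, lp.adjoint_evalCLM]
  rw [hadj, comp_finsetSum]
  refine Finset.sum_congr rfl fun k hk => ?_
  rw [comp_smulₛₗ, ← comp_assoc, rowOperator_comp_single T α hk, smul_comp, smul_smul,
    RingHom.id_apply, RCLike.conj_mul]

theorem norm_rowOperator_sq (T : ι → E →L[𝕜] F) (α : ι → 𝕜) (s : Finset ι) :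
    ‖rowOperator T α s‖ ^ 2 = ‖∑ k ∈ s, ((‖α k‖ : 𝕜) ^ 2) • (T k ∘L (T k)†)‖ :=
  calc ‖rowOperator T α s‖ ^ 2 = ‖(rowOperator T α s)†‖ * ‖(rowOperator T α s)†‖ := by
        rw [LinearIsometryEquiv.norm_map, sq]
    _ = ‖rowOperator T α s ∘L (rowOperator T α s)†‖ := by
        rw [← norm_adjoint_comp_self, adjoint_adjoint]
    _ = _ := by rw [rowOperator_comp_adjoint]

end RowOperator

theorem norm_sum_smul_comp_adjoint_le_of_subset {ι H : Type*} [NormedAddCommGroup H]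
    [InnerProductSpace ℂ H] [CompleteSpace H] (T : ι → H →L[ℂ] H) {c : ι → ℝ}
    (hc : ∀ k, 0 ≤ c k) {s t : Finset ι} (hst : s ⊆ t) :
    ‖∑ k ∈ s, c k • (T k ∘L (T k)†)‖ ≤ ‖∑ k ∈ t, c k • (T k ∘L (T k)†)‖ := by
  have hpos (k : ι) : 0 ≤ c k • (T k ∘L (T k)†) := smul_nonneg (hc k) (mul_star_self_nonneg (T k))
  exact CStarAlgebra.norm_le_norm_of_nonneg_of_le (Finset.sum_nonneg fun k _ => hpos k)
    (Finset.sum_le_sum_of_subset_of_nonneg hst fun k _ _ => hpos k)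

variable {K : Type*} [NormedAddCommGroup K] [InnerProductSpace ℂ K] [CompleteSpace K]

theorem matrix_units_row_norm_and_monotone_general
    (T : ℕ → K →L[ℂ] K)
    (T0j : ℕ → (lp (fun _ : ℕ => K) 2 →L[ℂ] lp (fun _ : ℕ => K) 2))
    (hT0j : ∀ j (ξ : lp (fun _ : ℕ => K) 2) (n : ℕ),
      (T0j j ξ) n = if n = 0 then T j (ξ j) else 0) :
    (∀ (n : ℕ) (α : ℕ → ℂ),
      ‖∑ k ∈ Finset.range (n + 1), α k • T0j k‖ ^ 2 =
        ‖∑ k ∈ Finset.range (n + 1),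
          (‖α k‖ ^ 2) • (T k ∘L ContinuousLinearMap.adjoint (T k))‖) ∧
    (∀ (n m : ℕ) (α : ℕ → ℂ), n ≤ m →
      ‖∑ k ∈ Finset.range (n + 1), α k • T0j k‖ ≤
        ‖∑ k ∈ Finset.range (m + 1), α k • T0j k‖) := by
  have hrow (s : Finset ℕ) (α : ℕ → ℂ) :
      ∑ k ∈ s, α k • T0j k = lp.singleContinuousLinearMap ℂ _ 2 0 ∘L rowOperator T α s := by
    simp only [rowOperator, comp_finsetSum, comp_smul, fun k =>
      lp.eq_singleContinuousLinearMap_comp 0 (T0j k) (T k ∘L lp.evalCLM ℂ _ 2 k) (hT0j k)]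
  have hnorm (s : Finset ℕ) (α : ℕ → ℂ) :
      ‖∑ k ∈ s, α k • T0j k‖ ^ 2 = ‖∑ k ∈ s, (‖α k‖ ^ 2) • (T k ∘L (T k)†)‖ := by
    simp only [hrow, lp.norm_singleContinuousLinearMap_comp, norm_rowOperator_sq,
      ← RCLike.ofReal_pow, ← RCLike.real_smul_eq_coe_smul]
  refine ⟨fun n α => hnorm _ α, fun n m α hnm => ?_⟩
  rw [← pow_le_pow_iff_left₀ (norm_nonneg _) (norm_nonneg _) two_ne_zero, hnorm, hnorm]
  exact norm_sum_smul_comp_adjoint_le_of_subset T (fun k => sq_nonneg ‖α k‖)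
    (Finset.range_subset_range.2 (by omega))

/-- For the matrix units `T_{0j} = E_{0j} ⊗ T_j` on `H = ℓ²(ℕ, K)` coming from a sequence
of invertible operators `T_k` with `T_0 = 1`, one has
`‖Σ_{k≤n} α_k T_{0k}‖² = ‖Σ_{k≤n} |α_k|² T_k T_k^*‖`; consequently `(T_{0k})` is a
monotone basic sequence. -/
theorem matrix_units_row_norm_and_monotone
    (T Tinv : ℕ → K →L[ℂ] K)
    (hT0 : T 0 = 1)
    (hTinv₁ : ∀ k, T k ∘L Tinv k = 1) (hTinv₂ : ∀ k, Tinv k ∘L T k = 1)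
    (T0j : ℕ → (lp (fun _ : ℕ => K) 2 →L[ℂ] lp (fun _ : ℕ => K) 2))
    (hT0j : ∀ j (ξ : lp (fun _ : ℕ => K) 2) (n : ℕ),
      (T0j j ξ) n = if n = 0 then T j (ξ j) else 0) :
    (∀ (n : ℕ) (α : ℕ → ℂ),
      ‖∑ k ∈ Finset.range (n + 1), α k • T0j k‖ ^ 2 =
        ‖∑ k ∈ Finset.range (n + 1),
          (‖α k‖ ^ 2) • (T k ∘L ContinuousLinearMap.adjoint (T k))‖) ∧
    (∀ (n m : ℕ) (α : ℕ → ℂ), n ≤ m →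
      ‖∑ k ∈ Finset.range (n + 1), α k • T0j k‖ ≤
        ‖∑ k ∈ Finset.range (m + 1), α k • T0j k‖) :=
  matrix_units_row_norm_and_monotone_general T T0j hT0j
end
end

section
/- Let A be a commutative complex Banach algebra (not necessarily unital) such that A has no nonzero annihilators, i.e. if x ∈ A satisfies x a = 0 for all a ∈ A then x = 0. Suppose A contains a sequence (q_k)_{k ∈ ℕ} of nonzero idempotents with q_j q_k = 0 for j ≠ k, such that q_k a ∈ ℂ q_k for all a ∈ A and all k, and such that the linear span of ⋃_k {a q_k : a ∈ A} is norm-dense in A. Then: (1) A is semisimple, i.e. its Jacobson radical {x ∈ A : x is quasi-invertible and a x is quasi-invertible for every a ∈ A} equals {0}; and (2) A is an annihilator algebra: for every norm-closed ideal J of A with J ≠ A there exists a nonzero b ∈ A with b j = 0 for all j ∈ J. -/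
/-!
Every `x` in the radical kills each `q k`: if `q k * x = c • q k` with `c ≠ 0`, then the
idempotent `q k = (c⁻¹ • q k) * x` would be quasi-invertible, forcing `q k = 0`. Dually, a proper
closed ideal `J` misses some `q k` (otherwise it contains the dense span of the `A q k`), and then
minimality forces `q k * j = 0` for every `j ∈ J`. The absence of annihilators together with the
density of the span finishes both parts.
-/

theorem Submodule.eq_top_of_isClosed_of_dense_span {R M : Type*} [Semiring R] [AddCommMonoid M]
    [Module R M] [TopologicalSpace M] {p : Submodule R M} {s : Set M}
    (hp : IsClosed (p : Set M)) (hs : s ⊆ p) (hdense : Dense (span R s : Set M)) : p = ⊤ := by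
  have hpdense : Dense (p : Set M) := hdense.mono (span_le.mpr hs)
  refine eq_top_iff.mpr fun x _ => ?_
  rw [← SetLike.mem_coe, ← hp.closure_eq]
  exact hpdense x

theorem mul_eq_zero_of_dense_span {R A : Type*} [CommSemiring R] [NonUnitalNonAssocSemiring A]
    [Module R A] [SMulCommClass R A A] [IsScalarTower R A A] [TopologicalSpace A]
    [ContinuousMul A] [T1Space A] {s : Set A} (hdense : Dense (Submodule.span R s : Set A))
    {x : A} (hx : ∀ y ∈ s, x * y = 0) (a : A) : x * a = 0 := by
  have hker := (LinearMap.ker (LinearMap.mulLeft R x)).eq_top_of_isClosed_of_dense_span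
    (isClosed_singleton.preimage (continuous_const.mul continuous_id)) hx hdense
  exact LinearMap.congr_fun (LinearMap.ker_eq_top.mp hker) a

theorem eq_zero_of_isIdempotentElem_of_add_eq_mul {A : Type*} [NonUnitalRing A] {e y : A}
    (he : IsIdempotentElem e) (h : e + y = e * y) : e = 0 := by
  have hmul := congrArg (e * ·) h
  simp only [mul_add, ← mul_assoc, he.eq] at hmul
  exact add_eq_right.mp hmul

section MinimalIdempotent

variable {𝕜 A : Type*} [Field 𝕜] [NonUnitalRing A] [Module 𝕜 A] {q : A} {c : 𝕜}

theorem mul_eq_zero_of_forall_add_eq_mul [IsScalarTower 𝕜 A A] {x : A}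
    (hq : IsIdempotentElem q) (hq0 : q ≠ 0) (hc : q * x = c • q)
    (hx : ∀ a : A, ∃ y : A, a * x + y = a * x * y) : q * x = 0 := by
  by_cases hc0 : c = 0
  · rw [hc, hc0, zero_smul]
  have hqx : (c⁻¹ • q) * x = q := by rw [smul_mul_assoc, hc, inv_smul_smul₀ hc0]
  obtain ⟨y, hy⟩ := hx (c⁻¹ • q)
  rw [hqx] at hy
  exact absurd (eq_zero_of_isIdempotentElem_of_add_eq_mul hq hy) hq0

theorem mul_eq_zero_of_notMem_submodule {p : Submodule 𝕜 A} {j : A} (hc : q * j = c • q)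
    (hqj : q * j ∈ p) (hq : q ∉ p) : q * j = 0 := by
  by_cases hc0 : c = 0
  · rw [hc, hc0, zero_smul]
  rw [hc] at hqj
  exact absurd ((p.smul_mem_iff hc0).mp hqj) hq

end MinimalIdempotent

theorem commutative_algebra_with_minimal_idempotents_semisimple_annihilator_general
    {A : Type*} [NonUnitalNormedCommRing A] [NormedSpace ℂ A]
    [IsScalarTower ℂ A A] [SMulCommClass ℂ A A]
    (hann : ∀ x : A, (∀ a : A, x * a = 0) → x = 0)
    (q : ℕ → A)
    (hqne : ∀ k, q k ≠ 0)
    (hqidem : ∀ k, q k * q k = q k)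
    (hqmin : ∀ (k : ℕ) (a : A), ∃ c : ℂ, q k * a = c • q k)
    (hdense : Dense
      (↑(Submodule.span ℂ {y : A | ∃ (k : ℕ) (a : A), y = a * q k}) : Set A)) :
    -- (1) `A` is semisimple: the Jacobson radical is zero
    (∀ x : A, (∃ y : A, x + y = x * y) → (∀ a : A, ∃ y : A, a * x + y = a * x * y) →
      x = 0) ∧
    -- (2) `A` is an annihilator algebra
    (∀ J : Set A, IsClosed J → (0 : A) ∈ J → (∀ x ∈ J, ∀ y ∈ J, x + y ∈ J) →
      (∀ (c : ℂ), ∀ x ∈ J, c • x ∈ J) → (∀ a : A, ∀ j ∈ J, a * j ∈ J) →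
      J ≠ Set.univ → ∃ b : A, b ≠ 0 ∧ ∀ j ∈ J, b * j = 0) := by
  have eq_zero_of_mul_q_eq_zero : ∀ x : A, (∀ k, x * q k = 0) → x = 0 := fun x hx =>
    hann x <| mul_eq_zero_of_dense_span hdense <| by
      rintro _ ⟨k, a, rfl⟩
      rw [mul_left_comm, hx, mul_zero]
  refine ⟨fun x _ hx => eq_zero_of_mul_q_eq_zero x fun k => ?_,
    fun J hJ hJ0 hJadd hJsmul hJmul hJne => ?_⟩
  · obtain ⟨c, hc⟩ := hqmin k x
    rw [mul_comm]
    exact mul_eq_zero_of_forall_add_eq_mul (hqidem k) (hqne k) hc hx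
  · let p : Submodule ℂ A :=
      { carrier := J
        add_mem' := fun hx hy => hJadd _ hx _ hy
        zero_mem' := hJ0
        smul_mem' := hJsmul }
    obtain ⟨k, hk⟩ : ∃ k, q k ∉ p := by
      by_contra! hall
      refine hJne (congrArg ((↑) : Submodule ℂ A → Set A)
        (p.eq_top_of_isClosed_of_dense_span hJ ?_ hdense))
      rintro _ ⟨k, a, rfl⟩
      exact hJmul a _ (hall k)
    refine ⟨q k, hqne k, fun j hj => ?_⟩
    obtain ⟨c, hc⟩ := hqmin k j
    exact mul_eq_zero_of_notMem_submodule hc (hJmul _ _ hj) hk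

/-- A commutative complex Banach algebra with no nonzero annihilators, possessing a sequence
of nonzero mutually orthogonal algebraically minimal idempotents `q_k` such that the span of
`⋃_k A q_k` is dense, is semisimple and is an annihilator algebra. -/
theorem commutative_algebra_with_minimal_idempotents_semisimple_annihilator
    {A : Type*} [NonUnitalNormedCommRing A] [NormedSpace ℂ A]
    [IsScalarTower ℂ A A] [SMulCommClass ℂ A A] [CompleteSpace A]
    (hann : ∀ x : A, (∀ a : A, x * a = 0) → x = 0)
    (q : ℕ → A)
    (hqne : ∀ k, q k ≠ 0)
    (hqidem : ∀ k, q k * q k = q k)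
    (hqorth : ∀ j k, j ≠ k → q j * q k = 0)
    (hqmin : ∀ (k : ℕ) (a : A), ∃ c : ℂ, q k * a = c • q k)
    (hdense : Dense
      (↑(Submodule.span ℂ {y : A | ∃ (k : ℕ) (a : A), y = a * q k}) : Set A)) :
    -- (1) `A` is semisimple: the Jacobson radical is zero
    (∀ x : A, (∃ y : A, x + y = x * y) → (∀ a : A, ∃ y : A, a * x + y = a * x * y) →
      x = 0) ∧
    -- (2) `A` is an annihilator algebra
    (∀ J : Set A, IsClosed J → (0 : A) ∈ J → (∀ x ∈ J, ∀ y ∈ J, x + y ∈ J) →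
      (∀ (c : ℂ), ∀ x ∈ J, c • x ∈ J) → (∀ a : A, ∀ j ∈ J, a * j ∈ J) →
      J ≠ Set.univ → ∃ b : A, b ≠ 0 ∧ ∀ j ∈ J, b * j = 0) :=
  commutative_algebra_with_minimal_idempotents_semisimple_annihilator_general hann q hqne hqidem
    hqmin hdense
end

section
/- Let H be a complex Hilbert space, let A be a commutative norm-closed subalgebra of B(H) with no nonzero annihilators (if x ∈ A satisfies x a = 0 for all a ∈ A then x = 0), and let (q_k)_{k ∈ ℕ} be a sequence of nonzero mutually orthogonal self-adjoint projections in A (q_k = q_k² = q_k^*, q_j q_k = 0 for j ≠ k) such that q_k a ∈ ℂ q_k for all a ∈ A and all k, and such that the linear span of ⋃_k {a q_k : a ∈ A} is norm-dense in A. Then there is an isometric algebra isomorphism from A onto c₀, the Banach algebra of complex sequences converging to 0 with pointwise operations and the supremum norm, which sends each q_k to the indicator sequence of {k}. -/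
/-!
Each `q k` is a minimal projection, so the coefficient of `q k` in `q k * x` is a character
`χ k` of `A`; composing `x ↦ q k * x` with a normalised Hahn–Banach functional extends it to a
contraction on `B(H)`. For a finite combination `x = ∑ c k • q k` of the orthogonal projections the
C⋆-identity and `star x * x ≤ (max ‖c k‖) ^ 2 • ∑ q k` give `‖x‖ = max_k ‖χ k x‖`, so
`x ↦ (χ k x)_k` is isometric with finitely supported values on these combinations. The density
hypothesis identifies `A` with their closure, and continuity and completeness carry isometry,
multiplicativity and the values in `c₀` to `A`, and make the map onto `c₀`.
-/

open scoped ZeroAtInfty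

variable {H : Type*} [NormedAddCommGroup H] [InnerProductSpace ℂ H] [CompleteSpace H]

open Filter Topology
open scoped BoundedContinuousFunction

theorem IsStarProjection.sum {R ι : Type*} [NonUnitalSemiring R] [StarRing R] {p : ι → R}
    (hp : ∀ i, IsStarProjection (p i)) (horth : Pairwise fun i j => p i * p j = 0)
    (s : Finset ι) : IsStarProjection (∑ i ∈ s, p i) := by
  classical
  induction s using Finset.induction_on with
  | empty => simp [IsStarProjection.zero]
  | insert i s hi ih =>
    rw [Finset.sum_insert hi]
    refine (hp i).add ih ?_
    rw [Finset.mul_sum]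
    exact Finset.sum_eq_zero fun j hj => horth (ne_of_mem_of_not_mem hj hi).symm

section OrthogonalProjections

variable {E ι : Type*} [NonUnitalCStarAlgebra E] {q : ι → E}

theorem star_sum_smul_mul_sum_smul_of_orthogonal (hq : ∀ i, IsStarProjection (q i))
    (horth : Pairwise fun i j => q i * q j = 0) (s : Finset ι) (c : ι → ℂ) :
    star (∑ i ∈ s, c i • q i) * ∑ i ∈ s, c i • q i = ∑ i ∈ s, (‖c i‖ ^ 2 : ℝ) • q i := by
  classical
  simp only [star_sum, star_smul, (hq _).isSelfAdjoint.star_eq, Finset.sum_mul, Finset.mul_sum,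
    smul_mul_smul_comm]
  refine Finset.sum_congr rfl fun i hi => ?_
  rw [Finset.sum_eq_single_of_mem i hi fun j _ hji => by rw [horth hji, smul_zero],
    (hq i).isIdempotentElem.eq, RCLike.star_def, RCLike.conj_mul, ← Complex.coe_smul]
  norm_cast

/-- In the C⋆-order, `star x * x ≤ m ^ 2 • ∑ q i` for `x = ∑ c i • q i`, and the sum of the
`q i` is a projection. -/
theorem norm_sum_smul_le_of_orthogonal [PartialOrder E] [StarOrderedRing E]
    (hq : ∀ i, IsStarProjection (q i)) (horth : Pairwise fun i j => q i * q j = 0)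
    {s : Finset ι} {c : ι → ℂ} {m : ℝ} (hm : 0 ≤ m) (hc : ∀ i ∈ s, ‖c i‖ ≤ m) :
    ‖∑ i ∈ s, c i • q i‖ ≤ m := by
  have hle : star (∑ i ∈ s, c i • q i) * ∑ i ∈ s, c i • q i ≤ (m ^ 2) • ∑ i ∈ s, q i := by
    rw [star_sum_smul_mul_sum_smul_of_orthogonal hq horth, Finset.smul_sum]
    refine Finset.sum_le_sum fun i hi => smul_le_smul_of_nonneg_right ?_ (hq i).nonneg
    exact pow_le_pow_left₀ (norm_nonneg _) (hc i hi) 2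
  have hnorm := CStarAlgebra.norm_le_norm_of_nonneg_of_le (star_mul_self_nonneg _) hle
  rw [CStarRing.norm_star_mul_self, norm_smul, Real.norm_of_nonneg (by positivity)] at hnorm
  have hP : ‖∑ i ∈ s, q i‖ ≤ 1 := (IsStarProjection.sum hq horth s).norm_le
  nlinarith [norm_nonneg (∑ i ∈ s, c i • q i)]

end OrthogonalProjections

/-- Normalise a Hahn–Banach functional `g` with `g q = ‖q‖` and precompose it with `x ↦ q * x`. -/
theorem exists_dual_eq_of_mul_eq_smul {𝕜 E : Type*} [RCLike 𝕜] [NonUnitalNormedRing E]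
    [NormedSpace 𝕜 E] [IsScalarTower 𝕜 E E] [SMulCommClass 𝕜 E E] {q : E} (hq : q ≠ 0) :
    ∃ χ : StrongDual 𝕜 E, ‖χ‖ ≤ 1 ∧ ∀ x (μ : 𝕜), q * x = μ • q → χ x = μ := by
  obtain ⟨g, hg, hgq⟩ := exists_dual_vector 𝕜 q (norm_ne_zero_iff.mpr hq)
  have hq' : (‖q‖ : 𝕜) ≠ 0 := by exact_mod_cast norm_ne_zero_iff.mpr hq
  refine ⟨(‖q‖⁻¹ : 𝕜) • g.comp (ContinuousLinearMap.mul 𝕜 E q), ?_, fun x μ hx => ?_⟩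
  · refine ContinuousLinearMap.opNorm_le_bound _ zero_le_one fun x => ?_
    have hgx : ‖g (q * x)‖ ≤ ‖q‖ * ‖x‖ :=
      (g.le_of_opNorm_le hg.le _).trans (by rw [one_mul]; exact norm_mul_le q x)
    simp only [smul_apply, ContinuousLinearMap.comp_apply,
      ContinuousLinearMap.mul_apply', norm_smul, norm_inv, RCLike.norm_ofReal, abs_norm]
    rw [inv_mul_le_iff₀ (norm_pos_iff.mpr hq), one_mul]
    exact hgx
  · simp only [smul_apply, ContinuousLinearMap.comp_apply,
      ContinuousLinearMap.mul_apply', hx, map_smul, hgq, smul_eq_mul]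
    field_simp

namespace ContinuousLinearMap

variable {𝕜 E α : Type*} [RCLike 𝕜] [NormedAddCommGroup E] [NormedSpace 𝕜 E]
  [TopologicalSpace α] [DiscreteTopology α]

noncomputable def toBCFPi (χ : α → StrongDual 𝕜 E) (hχ : ∀ a, ‖χ a‖ ≤ 1) : E →L[𝕜] (α →ᵇ 𝕜) :=
  LinearMap.mkContinuous
    { toFun x := BoundedContinuousFunction.ofNormedAddCommGroupDiscrete (fun a => χ a x) ‖x‖
        fun a => by simpa using (χ a).le_of_opNorm_le (hχ a) x
      map_add' x y := by ext; simp
      map_smul' c x := by ext; simp }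
    1 fun x => by
      rw [one_mul, BoundedContinuousFunction.norm_le (norm_nonneg x)]
      simpa using fun a => (χ a).le_of_opNorm_le (hχ a) x

theorem norm_toBCFPi_apply_le (χ : α → StrongDual 𝕜 E) (hχ : ∀ a, ‖χ a‖ ≤ 1) (x : E) :
    ‖toBCFPi χ hχ x‖ ≤ ‖x‖ := by
  simpa using (toBCFPi χ hχ).le_of_opNorm_le (LinearMap.mkContinuous_norm_le _ zero_le_one _) x

end ContinuousLinearMap

theorem ZeroAtInftyContinuousMap.mem_range_toBCF_iff {α β : Type*} [TopologicalSpace α]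
    [SeminormedAddCommGroup β] {g : α →ᵇ β} :
    g ∈ Set.range toBCF ↔ Tendsto g (cocompact α) (𝓝 0) :=
  ⟨by rintro ⟨f, rfl⟩; exact f.zero_at_infty', fun h => ⟨⟨g.toContinuousMap, h⟩, rfl⟩⟩

structure IsCoeffFamily {E : Type*} [NonUnitalCStarAlgebra E] (q : ℕ → E)
    (χ : ℕ → StrongDual ℂ E) : Prop where
  isStarProjection : ∀ k, IsStarProjection (q k)
  orthogonal : Pairwise fun j k => q j * q k = 0
  norm_le_one : ∀ k, ‖χ k‖ ≤ 1
  apply_eq_of_mul_eq_smul : ∀ k x (μ : ℂ), q k * x = μ • q k → χ k x = μ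

namespace IsCoeffFamily

variable {E : Type*} [NonUnitalCStarAlgebra E] {q : ℕ → E} {χ : ℕ → StrongDual ℂ E}

theorem mul_proj (h : IsCoeffFamily q χ) (k j : ℕ) :
    q k * q j = (if k = j then 1 else 0 : ℂ) • q k := by
  split_ifs with hkj
  · rw [hkj, (h.isStarProjection j).isIdempotentElem.eq, one_smul]
  · rw [h.orthogonal hkj, zero_smul]

theorem apply_proj (h : IsCoeffFamily q χ) (k j : ℕ) :
    χ k (q j) = if k = j then 1 else 0 :=
  h.apply_eq_of_mul_eq_smul k _ _ (h.mul_proj k j)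

theorem apply_sum_smul (h : IsCoeffFamily q χ) (k : ℕ) (s : Finset ℕ) (c : ℕ → ℂ) :
    χ k (∑ j ∈ s, c j • q j) = if k ∈ s then c k else 0 := by
  simp [h.apply_proj, Finset.sum_ite_eq]

theorem exists_eq_sum_of_mem_span (h : IsCoeffFamily q χ) {x : E}
    (hx : x ∈ Submodule.span ℂ (Set.range q)) : ∃ s : Finset ℕ, x = ∑ k ∈ s, χ k x • q k := by
  obtain ⟨c, rfl⟩ := Finsupp.mem_span_range_iff_exists_finsupp.mp hx
  refine ⟨c.support, Finset.sum_congr rfl fun k hk => ?_⟩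
  rw [Finsupp.sum, h.apply_sum_smul, if_pos hk]

noncomputable def coeffs (h : IsCoeffFamily q χ) : E →L[ℂ] (ℕ →ᵇ ℂ) :=
  ContinuousLinearMap.toBCFPi χ h.norm_le_one

@[simp]
theorem coeffs_apply (h : IsCoeffFamily q χ) (x : E) (k : ℕ) : h.coeffs x k = χ k x :=
  rfl

theorem norm_le_norm_coeffs_of_mem_span [PartialOrder E] [StarOrderedRing E]
    (h : IsCoeffFamily q χ) {x : E} (hx : x ∈ Submodule.span ℂ (Set.range q)) :
    ‖x‖ ≤ ‖h.coeffs x‖ := by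
  obtain ⟨s, hs⟩ := h.exists_eq_sum_of_mem_span hx
  rw [hs]
  refine norm_sum_smul_le_of_orthogonal h.isStarProjection h.orthogonal (norm_nonneg _)
    fun k _ => ?_
  rw [← hs, ← h.coeffs_apply]
  exact BoundedContinuousFunction.norm_coe_le_norm _ k

theorem tendsto_coeffs_of_mem_span (h : IsCoeffFamily q χ) {x : E}
    (hx : x ∈ Submodule.span ℂ (Set.range q)) : Tendsto (h.coeffs x) atTop (𝓝 0) := by
  obtain ⟨s, hs⟩ := h.exists_eq_sum_of_mem_span hx
  refine tendsto_const_nhds.congr' ?_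
  filter_upwards [eventually_gt_atTop (s.sup id)] with k hk
  have hks : k ∉ s := fun hk' => (Finset.le_sup (f := id) hk').not_gt hk
  rw [coeffs_apply, hs, h.apply_sum_smul, if_neg hks]

theorem norm_coeffs_of_mem_topologicalClosure [PartialOrder E] [StarOrderedRing E]
    (h : IsCoeffFamily q χ) {x : E} (hx : x ∈ (Submodule.span ℂ (Set.range q)).topologicalClosure) :
    ‖h.coeffs x‖ = ‖x‖ := by
  refine closure_minimal (fun y hy => ?_)
    (isClosed_eq (continuous_norm.comp h.coeffs.continuous) continuous_norm) hx
  exact le_antisymm (ContinuousLinearMap.norm_toBCFPi_apply_le _ _ y)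
    (h.norm_le_norm_coeffs_of_mem_span hy)

theorem coeffs_injOn [PartialOrder E] [StarOrderedRing E] (h : IsCoeffFamily q χ) :
    Set.InjOn h.coeffs (Submodule.span ℂ (Set.range q)).topologicalClosure := by
  intro x hx y hy hxy
  rw [← sub_eq_zero, ← norm_eq_zero,
    ← h.norm_coeffs_of_mem_topologicalClosure (Submodule.sub_mem _ hx hy), map_sub, hxy, sub_self,
    norm_zero]

theorem coeffs_mem_range_toBCF_of_mem_topologicalClosure (h : IsCoeffFamily q χ) {x : E}
    (hx : x ∈ (Submodule.span ℂ (Set.range q)).topologicalClosure) :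
    h.coeffs x ∈ Set.range ZeroAtInftyContinuousMap.toBCF := by
  refine closure_minimal (fun y hy => ?_)
    (ZeroAtInftyContinuousMap.isClosed_range_toBCF.preimage h.coeffs.continuous) hx
  rw [Set.mem_preimage, ZeroAtInftyContinuousMap.mem_range_toBCF_iff, cocompact_eq_atTop]
  exact h.tendsto_coeffs_of_mem_span hy

theorem mul_eq_smul_of_mem_topologicalClosure (h : IsCoeffFamily q χ) (k : ℕ) {x : E}
    (hx : x ∈ (Submodule.span ℂ (Set.range q)).topologicalClosure) : q k * x = χ k x • q k := by
  have hclosed : IsClosed {y : E | q k * y = χ k y • q k} :=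
    isClosed_eq (continuous_const_mul _) ((χ k).continuous.smul continuous_const)
  refine closure_minimal (fun y hy => ?_) hclosed hx
  induction hy using Submodule.span_induction with
  | mem y hy =>
    obtain ⟨j, rfl⟩ := hy
    rw [Set.mem_ofPred_eq, h.apply_proj, h.mul_proj]
  | zero => simp
  | add y z _ _ hy hz =>
    rw [Set.mem_ofPred_eq] at hy hz ⊢
    rw [mul_add, hy, hz, map_add, add_smul]
  | smul c y _ hy =>
    rw [Set.mem_ofPred_eq] at hy ⊢
    rw [mul_smul_comm, hy, map_smul, smul_eq_mul, smul_smul]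

theorem apply_mul_of_mem_topologicalClosure (h : IsCoeffFamily q χ) (k : ℕ) {x : E}
    (hx : x ∈ (Submodule.span ℂ (Set.range q)).topologicalClosure) {y : E}
    (hy : y ∈ (Submodule.span ℂ (Set.range q)).topologicalClosure) :
    χ k (x * y) = χ k x * χ k y := by
  refine h.apply_eq_of_mul_eq_smul k _ _ ?_
  rw [← mul_assoc, h.mul_eq_smul_of_mem_topologicalClosure k hx, smul_mul_assoc,
    h.mul_eq_smul_of_mem_topologicalClosure k hy, smul_smul]

theorem exists_mem_topologicalClosure_coeffs_eq [PartialOrder E] [StarOrderedRing E]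
    (h : IsCoeffFamily q χ) (f : C₀(ℕ, ℂ)) :
    ∃ x ∈ (Submodule.span ℂ (Set.range q)).topologicalClosure, h.coeffs x = f.toBCF := by
  set s : ℕ → E := fun n => ∑ k ∈ Finset.range n, f k • q k with hs
  have hspan (n : ℕ) : s n ∈ Submodule.span ℂ (Set.range q) :=
    Submodule.sum_mem _ fun k _ => Submodule.smul_mem _ _ (Submodule.subset_span ⟨k, rfl⟩)
  have hf : Tendsto f atTop (𝓝 0) := by simpa [cocompact_eq_atTop] using f.zero_at_infty'
  have hcauchy : CauchySeq s := by
    refine Metric.cauchySeq_iff'.2 fun ε hε => ?_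
    obtain ⟨N, hN⟩ := eventually_atTop.1
      (NormedAddGroup.tendsto_nhds_zero.1 hf (ε / 2) (half_pos hε))
    refine ⟨N, fun n hn => ?_⟩
    rw [dist_eq_norm, hs, ← Finset.sum_Ico_eq_sub _ hn]
    refine lt_of_le_of_lt ?_ (half_lt_self hε)
    exact norm_sum_smul_le_of_orthogonal h.isStarProjection h.orthogonal (half_pos hε).le
      fun k hk => (hN k (Finset.mem_Ico.1 hk).1).le
  obtain ⟨x, hx⟩ := cauchySeq_tendsto_of_complete hcauchy
  refine ⟨x, (Submodule.isClosed_topologicalClosure _).mem_of_tendsto hx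
      (.of_forall fun n => Submodule.le_topologicalClosure _ (hspan n)),
    BoundedContinuousFunction.ext fun k => ?_⟩
  refine tendsto_nhds_unique (((χ k).continuous.tendsto x).comp hx)
    (tendsto_const_nhds.congr' ?_)
  filter_upwards [eventually_gt_atTop k] with n hn
  simp [hs, h.apply_sum_smul, hn]

theorem exists_isometric_iso_c0 [PartialOrder E] [StarOrderedRing E] (h : IsCoeffFamily q χ)
    {A : Set E} (hA : A = (Submodule.span ℂ (Set.range q)).topologicalClosure)
    (hmul : ∀ x ∈ A, ∀ y ∈ A, x * y ∈ A) :
    ∃ φ : E → C₀(ℕ, ℂ),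
      (∀ x ∈ A, ‖φ x‖ = ‖x‖) ∧
      (∀ x ∈ A, ∀ y ∈ A, φ (x + y) = φ x + φ y) ∧
      (∀ (c : ℂ), ∀ x ∈ A, φ (c • x) = c • φ x) ∧
      (∀ x ∈ A, ∀ y ∈ A, φ (x * y) = φ x * φ y) ∧
      (∀ x ∈ A, ∀ y ∈ A, φ x = φ y → x = y) ∧
      (∀ f : C₀(ℕ, ℂ), ∃ x ∈ A, φ x = f) ∧
      (∀ k n : ℕ, φ (q k) n = if n = k then 1 else 0) := by
  set V := (Submodule.span ℂ (Set.range q)).topologicalClosure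
  subst hA
  choose! φ hφ using fun x (hx : x ∈ V) => h.coeffs_mem_range_toBCF_of_mem_topologicalClosure hx
  have hφ_apply (x : E) (hx : x ∈ V) (n : ℕ) : φ x n = χ n x :=
    congr($(hφ x hx) n)
  refine ⟨φ, fun x hx => ?_, fun x hx y hy => ?_, fun c x hx => ?_, fun x hx y hy => ?_,
    fun x hx y hy hxy => h.coeffs_injOn hx hy ?_, fun f => ?_, fun k n => ?_⟩
  · rw [← ZeroAtInftyContinuousMap.norm_toBCF_eq_norm, hφ x hx,
      h.norm_coeffs_of_mem_topologicalClosure hx]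
  · ext n
    simp only [ZeroAtInftyContinuousMap.add_apply, hφ_apply _ (add_mem hx hy), hφ_apply x hx,
      hφ_apply y hy, map_add]
  · ext n
    simp only [ZeroAtInftyContinuousMap.smul_apply, hφ_apply _ (Submodule.smul_mem _ c hx),
      hφ_apply x hx, map_smul]
  · ext n
    simp only [ZeroAtInftyContinuousMap.mul_apply, hφ_apply _ (hmul x hx y hy), hφ_apply x hx,
      hφ_apply y hy, h.apply_mul_of_mem_topologicalClosure n hx hy]
  · rw [← hφ x hx, ← hφ y hy, hxy]
  · obtain ⟨x, hx, hxf⟩ := h.exists_mem_topologicalClosure_coeffs_eq f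
    exact ⟨x, hx, ZeroAtInftyContinuousMap.toBCF_injective _ _ ((hφ x hx).trans hxf)⟩
  · rw [hφ_apply _ (Submodule.le_topologicalClosure _ (Submodule.subset_span ⟨k, rfl⟩)),
      h.apply_proj]

end IsCoeffFamily

theorem IsClosedSubalgebraSet.topologicalClosure_span_subset {A : Set (H →L[ℂ] H)}
    (hA : IsClosedSubalgebraSet A) {q : ℕ → H →L[ℂ] H} (hqA : ∀ k, q k ∈ A) :
    ((Submodule.span ℂ (Set.range q)).topologicalClosure : Set (H →L[ℂ] H)) ⊆ A := by
  obtain ⟨hclosed, h0, hadd, hsmul, -⟩ := hA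
  refine closure_minimal (fun x hx => ?_) hclosed
  induction hx using Submodule.span_induction with
  | mem x hx => obtain ⟨k, rfl⟩ := hx; exact hqA k
  | zero => exact h0
  | add x y _ _ hx hy => exact hadd x hx y hy
  | smul c x _ hx => exact hsmul c x hx

theorem subset_topologicalClosure_span_range {E : Type*} [Semiring E] [Module ℂ E]
    [TopologicalSpace E] [ContinuousAdd E] [ContinuousConstSMul ℂ E] {A : Set E} {q : ℕ → E}
    (hcomm : ∀ x ∈ A, ∀ y ∈ A, x * y = y * x) (hqA : ∀ k, q k ∈ A)
    (hqmin : ∀ (k : ℕ), ∀ a ∈ A, ∃ c : ℂ, q k * a = c • q k)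
    (hdense : A ⊆ closure
      (↑(Submodule.span ℂ {y : E | ∃ (k : ℕ), ∃ a ∈ A, y = a * q k}) : Set E)) :
    A ⊆ (Submodule.span ℂ (Set.range q)).topologicalClosure := by
  refine hdense.trans (closure_mono (Submodule.span_le.2 ?_))
  rintro _ ⟨k, a, ha, rfl⟩
  obtain ⟨c, hc⟩ := hqmin k a ha
  rw [SetLike.mem_coe, hcomm a ha (q k) (hqA k), hc]
  exact Submodule.smul_mem _ c (Submodule.subset_span (Set.mem_range_self k))

theorem commutative_operator_algebra_iso_c0_general
    (A : Set (H →L[ℂ] H)) (hA : IsClosedSubalgebraSet A)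
    (hcomm : ∀ x ∈ A, ∀ y ∈ A, x * y = y * x)
    (q : ℕ → H →L[ℂ] H)
    (hqA : ∀ k, q k ∈ A)
    (hqne : ∀ k, q k ≠ 0)
    (hqsa : ∀ k, IsSelfAdjoint (q k))
    (hqidem : ∀ k, q k * q k = q k)
    (hqorth : ∀ j k, j ≠ k → q j * q k = 0)
    (hqmin : ∀ (k : ℕ), ∀ a ∈ A, ∃ c : ℂ, q k * a = c • q k)
    (hdense : A ⊆ closure
      (↑(Submodule.span ℂ {y : H →L[ℂ] H | ∃ (k : ℕ), ∃ a ∈ A, y = a * q k}) :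
        Set (H →L[ℂ] H))) :
    ∃ φ : (H →L[ℂ] H) → C₀(ℕ, ℂ),
      (∀ x ∈ A, ‖φ x‖ = ‖x‖) ∧
      (∀ x ∈ A, ∀ y ∈ A, φ (x + y) = φ x + φ y) ∧
      (∀ (c : ℂ), ∀ x ∈ A, φ (c • x) = c • φ x) ∧
      (∀ x ∈ A, ∀ y ∈ A, φ (x * y) = φ x * φ y) ∧
      (∀ x ∈ A, ∀ y ∈ A, φ x = φ y → x = y) ∧
      (∀ f : C₀(ℕ, ℂ), ∃ x ∈ A, φ x = f) ∧
      (∀ k n : ℕ, φ (q k) n = if n = k then 1 else 0) := by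
  choose χ hχ using fun k => exists_dual_eq_of_mul_eq_smul (𝕜 := ℂ) (hqne k)
  have h : IsCoeffFamily q χ :=
    ⟨fun k => ⟨hqidem k, hqsa k⟩, hqorth, fun k => (hχ k).1, fun k => (hχ k).2⟩
  have hAV := (subset_topologicalClosure_span_range hcomm hqA hqmin hdense).antisymm
    (hA.topologicalClosure_span_subset hqA)
  obtain ⟨-, -, -, -, hmul⟩ := hA
  exact h.exists_isometric_iso_c0 hAV hmul

/-- A commutative operator algebra with no nonzero annihilators, generated (as a closed
linear span) by `⋃_k A q_k` for a sequence of nonzero mutually orthogonal algebraically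
minimal self-adjoint projections `q_k`, is isometrically isomorphic to `c₀`, with `q_k`
corresponding to the indicator sequence of `{k}`. -/
theorem commutative_operator_algebra_iso_c0
    (A : Set (H →L[ℂ] H)) (hA : IsClosedSubalgebraSet A)
    (hcomm : ∀ x ∈ A, ∀ y ∈ A, x * y = y * x)
    (hann : ∀ x ∈ A, (∀ a ∈ A, x * a = 0) → x = 0)
    (q : ℕ → H →L[ℂ] H)
    (hqA : ∀ k, q k ∈ A)
    (hqne : ∀ k, q k ≠ 0)
    (hqsa : ∀ k, IsSelfAdjoint (q k))
    (hqidem : ∀ k, q k * q k = q k)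
    (hqorth : ∀ j k, j ≠ k → q j * q k = 0)
    (hqmin : ∀ (k : ℕ), ∀ a ∈ A, ∃ c : ℂ, q k * a = c • q k)
    (hdense : A ⊆ closure
      (↑(Submodule.span ℂ {y : H →L[ℂ] H | ∃ (k : ℕ), ∃ a ∈ A, y = a * q k}) :
        Set (H →L[ℂ] H))) :
    ∃ φ : (H →L[ℂ] H) → C₀(ℕ, ℂ),
      (∀ x ∈ A, ‖φ x‖ = ‖x‖) ∧
      (∀ x ∈ A, ∀ y ∈ A, φ (x + y) = φ x + φ y) ∧
      (∀ (c : ℂ), ∀ x ∈ A, φ (c • x) = c • φ x) ∧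
      (∀ x ∈ A, ∀ y ∈ A, φ (x * y) = φ x * φ y) ∧
      (∀ x ∈ A, ∀ y ∈ A, φ x = φ y → x = y) ∧
      (∀ f : C₀(ℕ, ℂ), ∃ x ∈ A, φ x = f) ∧
      (∀ k n : ℕ, φ (q k) n = if n = k then 1 else 0) :=
  commutative_operator_algebra_iso_c0_general A hA hcomm q hqA hqne hqsa hqidem hqorth hqmin hdense
end

section
/- Let H be a complex Hilbert space and let A be a norm-closed subalgebra of B(H) with the property that for every nonzero self-adjoint projection p ∈ A there exists a nonzero self-adjoint projection q ∈ A with q A q = ℂ q and p q ≠ 0. Then every *-minimal projection in A is algebraically minimal: if p ∈ A is a nonzero self-adjoint projection such that the only self-adjoint projections q ∈ A with p q = q p = q are 0 and p, then p A p = ℂ p. -/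
/-!
Let `p` be `*`-minimal and let `q` be an algebraically minimal projection with `p q ≠ 0`.
Then `q p q = c q` for a real `c`, nonzero because `q p q = (p q)⋆ (p q)`, and
`c⁻¹ p q p` is a nonzero projection under `p`, hence equal to `p`: so `p q p = c p`.
For `a ∈ A`, also `q (p a p) q = μ q`, and sandwiching gives
`c² p a p = (p q p) a (p q p) = p (q (p a p) q) p = μ c p`.
-/

variable {H : Type*} [NormedAddCommGroup H] [InnerProductSpace ℂ H] [CompleteSpace H]

variable {R : Type*}

theorem IsStarProjection.star_mul_self_mul [NonUnitalSemiring R] [StarMul R] {p q : R}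
    (hp : IsStarProjection p) (hq : IsSelfAdjoint q) : star (p * q) * (p * q) = q * p * q := by
  rw [star_mul, hp.isSelfAdjoint.star_eq, hq.star_eq, mul_assoc, ← mul_assoc p p,
    hp.isIdempotentElem.eq, ← mul_assoc]

theorem star_eq_of_isSelfAdjoint_smul [AddCommGroup R] [StarAddMonoid R] [Module ℂ R]
    [StarModule ℂ R] {c : ℂ} {x : R} (hx : IsSelfAdjoint x) (hx0 : x ≠ 0)
    (hcx : IsSelfAdjoint (c • x)) : star c = c := by
  have h : (star c - c) • x = 0 := by
    rw [sub_smul, ← hx.star_eq, ← star_smul, hcx.star_eq, hx.star_eq, sub_self]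
  exact sub_eq_zero.mp ((smul_eq_zero.mp h).resolve_right hx0)

theorem IsStarProjection.inv_smul_mul_mul [NonUnitalRing R] [StarRing R] [Module ℂ R]
    [StarModule ℂ R] [IsScalarTower ℂ R R] [SMulCommClass ℂ R R] {p q : R}
    (hp : IsStarProjection p) (hq : IsStarProjection q) {c : ℂ} (hc0 : c ≠ 0) (hc : star c = c)
    (hqpq : q * p * q = c • q) : IsStarProjection (c⁻¹ • (p * q * p)) := by
  constructor
  · have hsq : (p * q * p) * (p * q * p) = c • (p * q * p) := by
      calc (p * q * p) * (p * q * p) = p * (q * (p * p) * q) * p := by noncomm_ring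
        _ = c • (p * q * p) := by
          rw [hp.isIdempotentElem.eq, hqpq, mul_smul_comm, smul_mul_assoc, mul_assoc]
    rw [IsIdempotentElem, smul_mul_smul_comm, hsq, smul_smul, mul_assoc, inv_mul_cancel₀ hc0,
      mul_one]
  · rw [IsSelfAdjoint, star_smul, star_inv₀, hc, star_mul, star_mul, hp.isSelfAdjoint.star_eq,
      hq.isSelfAdjoint.star_eq, mul_assoc]

theorem mul_mul_eq_smul_of_mul_mul_eq_smul [NonUnitalRing R] [Module ℂ R] [IsScalarTower ℂ R R]
    [SMulCommClass ℂ R R] {p q a : R} {c μ : ℂ} (hc0 : c ≠ 0)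
    (hpqp : p * q * p = c • p) (hμ : q * (p * a * p) * q = μ • q) :
    p * a * p = (μ / c) • p := by
  have h : (c * c) • (p * a * p) = (μ * c) • p :=
    calc (c * c) • (p * a * p) = (p * q * p) * a * (p * q * p) := by
          rw [hpqp, smul_mul_assoc, mul_smul_comm, smul_mul_assoc, smul_smul, mul_assoc p a]
      _ = p * (q * (p * a * p) * q) * p := by noncomm_ring
      _ = (μ * c) • p := by rw [hμ, mul_smul_comm, smul_mul_assoc, hpqp, smul_smul]
  rw [← inv_smul_smul₀ (mul_ne_zero hc0 hc0) (p * a * p), h, smul_smul]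
  congr 1
  field_simp

theorem IsStarProjection.mul_mul_ne_zero [NonUnitalNormedRing R] [StarRing R] [CStarRing R]
    {p q : R} (hp : IsStarProjection p) (hq : IsSelfAdjoint q) (hpq : p * q ≠ 0) :
    q * p * q ≠ 0 := by
  rwa [← hp.star_mul_self_mul hq, CStarRing.star_mul_self_ne_zero_iff]

theorem corner_eq_scalars [Semiring R] [Module ℂ R] [IsScalarTower ℂ R R]
    [SMulCommClass ℂ R R] {A : Set R} (hsmul : ∀ (c : ℂ), ∀ x ∈ A, c • x ∈ A) {p : R}
    (hpA : p ∈ A) (hp : IsIdempotentElem p) (h : ∀ a ∈ A, ∃ c : ℂ, p * a * p = c • p) :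
    {y | ∃ a ∈ A, y = p * a * p} = {y | ∃ c : ℂ, y = c • p} := by
  ext y
  constructor
  · rintro ⟨a, haA, rfl⟩
    exact (h a haA).imp fun _ ↦ id
  · rintro ⟨c, rfl⟩
    exact ⟨c • p, hsmul c p hpA, by rw [mul_smul_comm, smul_mul_assoc, hp.eq, hp.eq]⟩

/-- If every nonzero projection in the operator algebra `A` has nonzero product with some
algebraically minimal projection of `A`, then every `*`-minimal projection of `A` is
algebraically minimal. -/
theorem star_minimal_is_algebraically_minimal
    (A : Set (H →L[ℂ] H)) (hA : IsClosedSubalgebraSet A)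
    (hyp : ∀ p ∈ A, IsSelfAdjoint p → p * p = p → p ≠ 0 →
      ∃ q ∈ A, IsSelfAdjoint q ∧ q * q = q ∧ q ≠ 0 ∧
        ({y | ∃ a ∈ A, y = q * a * q} = {y | ∃ c : ℂ, y = c • q}) ∧ p * q ≠ 0) :
    ∀ p ∈ A, IsSelfAdjoint p → p * p = p → p ≠ 0 →
      (∀ q ∈ A, IsSelfAdjoint q → q * q = q → p * q = q → q * p = q → q = 0 ∨ q = p) →
      {y | ∃ a ∈ A, y = p * a * p} = {y | ∃ c : ℂ, y = c • p} := by
  intro p hpA hp_sa hp_idem hp0 hp_min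
  obtain ⟨-, -, -, hsmul, hmul⟩ := hA
  have hp : IsStarProjection p := ⟨hp_idem, hp_sa⟩
  obtain ⟨q, hqA, hq_sa, hq_idem, hq0, hq_min, hpq⟩ := hyp p hpA hp_sa hp_idem hp0
  have hq : IsStarProjection q := ⟨hq_idem, hq_sa⟩
  have hq_corner (a) (ha : a ∈ A) : ∃ μ : ℂ, q * a * q = μ • q := hq_min.le ⟨a, ha, rfl⟩
  obtain ⟨c, hqpq⟩ := hq_corner p hpA
  have hc0 : c ≠ 0 := by
    rintro rfl
    exact hp.mul_mul_ne_zero hq_sa hpq (hqpq.trans (zero_smul ℂ q))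
  have hc_real : star c = c := star_eq_of_isSelfAdjoint_smul hq_sa hq0 <|
    hqpq ▸ hp_sa.conjugate_self hq_sa
  have hpqp0 : p * q * p ≠ 0 :=
    hq.mul_mul_ne_zero hp_sa (by rwa [← hp_sa.star_eq, ← hq_sa.star_eq, ← star_mul, star_ne_zero])
  have he := hp.inv_smul_mul_mul hq hc0 hc_real hqpq
  have he_eq : c⁻¹ • (p * q * p) = p :=
    (hp_min _ (hsmul _ _ (hmul _ (hmul _ hpA _ hqA) _ hpA)) he.isSelfAdjoint he.isIdempotentElem
      (by rw [mul_smul_comm, ← mul_assoc, ← mul_assoc, hp_idem])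
      (by rw [smul_mul_assoc, mul_assoc, hp_idem])).resolve_left
      (smul_ne_zero (inv_ne_zero hc0) hpqp0)
  have hpqp : p * q * p = c • p := (smul_inv_smul₀ hc0 _).symm.trans (congrArg _ he_eq)
  refine corner_eq_scalars hsmul hpA hp_idem fun a ha ↦ ?_
  obtain ⟨μ, hμ⟩ := hq_corner _ (hmul _ (hmul _ hpA _ ha) _ hpA)
  exact ⟨μ / c, mul_mul_eq_smul_of_mul_mul_eq_smul hc0 hpqp hμ⟩
end

section
/- Let A be a unital complex Banach algebra with ‖1‖ = 1 and let x ∈ A with ‖x‖ ≤ 1. For n ≥ 1 set e_n = 1 − (1/n) Σ_{k=1}^n x^k. Then each e_n belongs to {(1−x)a : a ∈ A}, ‖e_n‖ ≤ 2 for all n, and e_n y → y in norm for every y in the norm closure of {(1−x)a : a ∈ A}. In particular, the norm closure of (1−x)A possesses a left bounded approximate identity. -/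
/-!
Writing `s_n = (1/n) Σ_{k=1}^n x^k`, the geometric-sum identity `(1 - x) Σ_{j<k} x^j = 1 - x^k`
averages to `e_n = 1 - s_n = (1 - x) · (1/n) Σ_{k=1}^n Σ_{j<k} x^j`, and telescoping gives
`e_n (1 - x) - (1 - x) = -(x - x^{n+1}) / n`, of norm at most `2/n`. So `e_n z → z` for every
`z ∈ (1 - x)A`, and since `‖e_n‖ ≤ 2` the left multiplications by `e_n` are equicontinuous,
which carries the convergence over to the closure.
-/

open Filter Finset Topology NNReal

theorem tendsto_mul_of_mem_closure_of_norm_le {ι A : Type*} [NonUnitalSeminormedRing A]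
    {l : Filter ι} {e : ι → A} {C : ℝ≥0} (he : ∀ i, ‖e i‖ ≤ C) {S : Set A}
    (hS : ∀ z ∈ S, Tendsto (e · * z) l (𝓝 z)) {y : A} (hy : y ∈ closure S) :
    Tendsto (e · * y) l (𝓝 y) := by
  have hLip : ∀ i, LipschitzWith C (e i * ·) := fun i ↦
    LipschitzWith.of_dist_le_mul fun y z ↦ by
      rw [dist_eq_norm, dist_eq_norm, ← mul_sub]
      exact (norm_mul_le _ _).trans (by gcongr; exact he i)
  exact closure_minimal hS ((LipschitzWith.uniformEquicontinuous _ C hLip).equicontinuous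
    |>.isClosed_setOfPred_tendsto continuous_id) hy

theorem sum_Icc_one_pow {R : Type*} [Semiring R] (x : R) (n : ℕ) :
    ∑ k ∈ Icc 1 n, x ^ k = x * ∑ k ∈ range n, x ^ k := by
  rw [mul_sum, ← Ico_add_one_right_eq_Icc, sum_Ico_eq_sum_range, Nat.add_sub_cancel]
  simp only [add_comm 1, pow_succ']

section CesaroUnit

variable (𝕜 : Type*) {A : Type*} [RCLike 𝕜] [NormedRing A] [NormedAlgebra 𝕜 A]

-- At `n = 0` this is `1`, since `(0 : 𝕜)⁻¹ = 0`.
noncomputable def cesaroUnit (x : A) (n : ℕ) : A :=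
  1 - (n : 𝕜)⁻¹ • ∑ k ∈ Icc 1 n, x ^ k

variable {𝕜} {x : A}

theorem cesaroUnit_eq_one_sub_mul {n : ℕ} (hn : n ≠ 0) :
    cesaroUnit 𝕜 x n = (1 - x) * ((n : 𝕜)⁻¹ • ∑ k ∈ Icc 1 n, ∑ j ∈ range k, x ^ j) := by
  rw [cesaroUnit, mul_smul_comm, mul_sum]
  simp only [mul_neg_geom_sum]
  rw [sum_sub_distrib, sum_const, Nat.card_Icc, Nat.add_sub_cancel, smul_sub,
    ← Nat.cast_smul_eq_nsmul 𝕜, smul_smul, inv_mul_cancel₀ (Nat.cast_ne_zero.mpr hn), one_smul]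

theorem cesaroUnit_mul_one_sub_sub (n : ℕ) :
    cesaroUnit 𝕜 x n * (1 - x) - (1 - x) = -((n : 𝕜)⁻¹ • (x - x ^ (n + 1))) := by
  rw [cesaroUnit, sub_mul, one_mul, sub_sub_cancel_left, smul_mul_assoc, sum_Icc_one_pow,
    mul_assoc, geom_sum_mul_neg, mul_sub, mul_one, ← pow_succ']

theorem norm_cesaroUnit_le [NormOneClass A] (hx : ‖x‖ ≤ 1) (n : ℕ) :
    ‖cesaroUnit 𝕜 x n‖ ≤ 2 := by
  have hsum : ‖∑ k ∈ Icc 1 n, x ^ k‖ ≤ n :=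
    calc ‖∑ k ∈ Icc 1 n, x ^ k‖ ≤ ∑ _k ∈ Icc 1 n, (1 : ℝ) :=
          norm_sum_le_of_le _ fun k _ ↦ (norm_pow_le x k).trans (pow_le_one₀ (norm_nonneg x) hx)
      _ = n := by simp
  calc ‖cesaroUnit 𝕜 x n‖ ≤ ‖(1 : A)‖ + (n : ℝ)⁻¹ * ‖∑ k ∈ Icc 1 n, x ^ k‖ := by
        rw [cesaroUnit, ← RCLike.norm_natCast (K := 𝕜), ← norm_inv, ← norm_smul]
        exact norm_sub_le _ _
    _ ≤ 1 + (n : ℝ)⁻¹ * n := by rw [norm_one]; gcongr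
    _ ≤ 2 := by
        rcases eq_or_ne n 0 with rfl | hn
        · norm_num
        · rw [inv_mul_cancel₀ (Nat.cast_ne_zero.mpr hn)]; norm_num

theorem tendsto_cesaroUnit_mul_one_sub (hx : ‖x‖ ≤ 1) :
    Tendsto (fun n ↦ cesaroUnit 𝕜 x n * (1 - x)) atTop (𝓝 (1 - x)) := by
  rw [tendsto_iff_norm_sub_tendsto_zero]
  refine squeeze_zero (fun _ ↦ norm_nonneg _) (fun n ↦ ?_)
    (tendsto_const_div_atTop_nhds_zero_nat 2)
  have hpow : ‖x ^ (n + 1)‖ ≤ 1 :=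
    (norm_pow_le' x n.succ_pos).trans (pow_le_one₀ (norm_nonneg x) hx)
  calc ‖cesaroUnit 𝕜 x n * (1 - x) - (1 - x)‖ = (n : ℝ)⁻¹ * ‖x - x ^ (n + 1)‖ := by
        rw [cesaroUnit_mul_one_sub_sub, norm_neg, norm_smul, norm_inv, RCLike.norm_natCast]
    _ ≤ (n : ℝ)⁻¹ * 2 := by gcongr; exact (norm_sub_le _ _).trans (by linarith)
    _ = 2 / n := inv_mul_eq_div _ _

end CesaroUnit

theorem cesaro_means_left_bai_general
    {A : Type*} [NormedRing A] [NormedAlgebra ℂ A] [NormOneClass A]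
    (x : A) (hx : ‖x‖ ≤ 1)
    (e : ℕ → A)
    (he : ∀ n : ℕ, e n = 1 - ((n : ℂ))⁻¹ • ∑ k ∈ Finset.Icc 1 n, x ^ k) :
    (∀ n : ℕ, 1 ≤ n → ∃ a : A, e n = (1 - x) * a) ∧
    (∀ n : ℕ, 1 ≤ n → ‖e n‖ ≤ 2) ∧
    (∀ y ∈ closure {z : A | ∃ a : A, z = (1 - x) * a},
      Tendsto (fun n => e n * y) atTop (nhds y)) := by
  obtain rfl : e = cesaroUnit ℂ x := funext he
  refine ⟨fun n hn ↦ ⟨_, cesaroUnit_eq_one_sub_mul (by omega)⟩,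
    fun n _ ↦ norm_cesaroUnit_le hx n, fun y hy ↦ ?_⟩
  refine tendsto_mul_of_mem_closure_of_norm_le (C := 2)
    (fun n ↦ by exact_mod_cast norm_cesaroUnit_le hx n) ?_ hy
  rintro _ ⟨a, rfl⟩
  simpa only [mul_assoc] using (tendsto_cesaroUnit_mul_one_sub hx).mul_const a

/-- For `x` of norm at most one in a unital complex Banach algebra, the Cesàro-type means
`e_n = 1 - (1/n) Σ_{k=1}^n x^k` lie in `(1-x)A`, are bounded by `2`, and form a left
bounded approximate identity for the norm closure of `(1-x)A`. -/
theorem cesaro_means_left_bai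
    {A : Type*} [NormedRing A] [NormedAlgebra ℂ A] [CompleteSpace A] [NormOneClass A]
    (x : A) (hx : ‖x‖ ≤ 1)
    (e : ℕ → A)
    (he : ∀ n : ℕ, e n = 1 - ((n : ℂ))⁻¹ • ∑ k ∈ Finset.Icc 1 n, x ^ k) :
    (∀ n : ℕ, 1 ≤ n → ∃ a : A, e n = (1 - x) * a) ∧
    (∀ n : ℕ, 1 ≤ n → ‖e n‖ ≤ 2) ∧
    (∀ y ∈ closure {z : A | ∃ a : A, z = (1 - x) * a},
      Tendsto (fun n => e n * y) atTop (nhds y)) :=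
  cesaro_means_left_bai_general x hx e he
end
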